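/- arXiv:1103.2717 — 3 statements merged into one kernel-verified Lean document; each statement's English description precedes it below -/
import Mathlib

section
/- Value of the Chio measure on entry-specification events: Let s,t ≥ 2, let ∅ ⊆ I ⊆ J ⊆ {1,…,s−1}×{1,…,t−1}, and let B : I → {−1,0,+1}. If the signed graph (X_B, σ_B) is balanced, then P_chio[E_B^J] = (1/2)^{|I| + f0(X_B) − β0(X_B)}; if (X_B, σ_B) is not balanced, then P_chio[E_B^J] = 0. In particular, P_chio[E_B^J] > 0 if and only if (X_B, σ_B) is balanced. -/
/-- The grid of index positions `{1,…,s-1} × {1,…,t-1}`. -/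
def mgrid (s t : ℕ) : Finset (ℕ × ℕ) := Finset.Icc 1 (s - 1) ×ˢ Finset.Icc 1 (t - 1)

/-- The Chio extension `J̆` of a set `J` of positions:
`J̆ = {(s,t)} ∪ {(i,t) : i ∈ p1(J)} ∪ {(s,j) : j ∈ p2(J)} ∪ J`. -/
def chioExt (s t : ℕ) (J : Finset (ℕ × ℕ)) : Finset (ℕ × ℕ) :=
  insert (s, t) (((J.image Prod.fst).image fun i => (i, t)) ∪
    ((J.image Prod.snd).image fun j => (s, j)) ∪ J)

/-- `A` condenses to `B` on `I`:
`A(i,j)·A(s,t) − A(i,t)·A(s,j) = 2·B(i,j)` for every `(i,j) ∈ I`. -/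
def CondensesTo (s t : ℕ) (I : Finset (ℕ × ℕ)) (A B : ℕ × ℕ → ℤ) : Prop :=
  ∀ p ∈ I, A p * A (s, t) - A (p.1, t) * A (s, p.2) = 2 * B p

/-- `A` encodes a function `E → {−1,+1}`: it takes values `±1` on `E` and is
normalized to `1` off `E`. -/
def IsSignOn (E : Finset (ℕ × ℕ)) (A : ℕ × ℕ → ℤ) : Prop :=
  (∀ p ∈ E, A p = 1 ∨ A p = -1) ∧ ∀ p ∉ E, A p = 1

/-- First projection `p1(I)` of a set of positions. -/
def proj1 (I : Finset (ℕ × ℕ)) : Finset ℕ := I.image Prod.fst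

/-- Second projection `p2(I)` of a set of positions. -/
def proj2 (I : Finset (ℕ × ℕ)) : Finset ℕ := I.image Prod.snd

/-- The vertex set of the bipartite graph `X_B`: a copy `Sum.inl i` of each row index
`i ∈ p1(I)` and a copy `Sum.inr j` of each column index `j ∈ p2(I)`. -/
def vertSet (I : Finset (ℕ × ℕ)) : Finset (ℕ ⊕ ℕ) :=
  (proj1 I).image Sum.inl ∪ (proj2 I).image Sum.inr

/-- `f0(X_B) = |p1(I)| + |p2(I)|`, the number of vertices of `X_B`. -/
def fZero (I : Finset (ℕ × ℕ)) : ℕ := (proj1 I).card + (proj2 I).card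

/-- The underlying graph `X_B` of the signed bipartite graph associated with `B : I → {−1,0,+1}`:
`Sum.inl i` is adjacent to `Sum.inr j` iff `(i,j) ∈ I` and `B (i,j) ≠ 0`. -/
def sGraph (I : Finset (ℕ × ℕ)) (B : ℕ × ℕ → ℤ) : SimpleGraph (ℕ ⊕ ℕ) where
  Adj u v := (∃ p ∈ I, B p ≠ 0 ∧ u = Sum.inl p.1 ∧ v = Sum.inr p.2) ∨
             (∃ p ∈ I, B p ≠ 0 ∧ v = Sum.inl p.1 ∧ u = Sum.inr p.2)
  symm := ⟨fun u v h => Or.symm h⟩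
  loopless := ⟨by
    rintro u (⟨p, -, -, h1, h2⟩ | ⟨p, -, -, h1, h2⟩) <;> subst h1 <;> simp at h2⟩

/-- `β0(X_B)`: the number of connected components of `X_B`, i.e. the number of connected
components of the ambient graph meeting the vertex set of `X_B`. -/
noncomputable def betaZero (I : Finset (ℕ × ℕ)) (B : ℕ × ℕ → ℤ) : ℕ :=
  Set.ncard ((sGraph I B).connectedComponentMk '' (vertSet I : Set (ℕ ⊕ ℕ)))

/-- The sign `σ_B` of an edge of `X_B`, read off from `B`. -/
def eSign (B : ℕ × ℕ → ℤ) : ℕ ⊕ ℕ → ℕ ⊕ ℕ → ℤ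
  | Sum.inl i, Sum.inr j => B (i, j)
  | Sum.inr j, Sum.inl i => B (i, j)
  | Sum.inl _, Sum.inl _ => 0
  | Sum.inr _, Sum.inr _ => 0

/-- The signed graph `(X_B, σ_B)` is balanced: every cycle contains an even number
of edges of sign `−1`. -/
def IsBalancedSG (I : Finset (ℕ × ℕ)) (B : ℕ × ℕ → ℤ) : Prop :=
  ∀ (v : ℕ ⊕ ℕ) (w : (sGraph I B).Walk v v), w.IsCycle →
    Even ((w.darts.filter fun d => decide (eSign B d.toProd.1 d.toProd.2 = -1)).length)

/-- The Chio measure of the entry-specification event `E_B^J`: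
`P_chio[E_B^J] = 2^{−|J̆|} · |{A : J̆ → {±1} : A condenses to B}|`. -/
noncomputable def Pchio (s t : ℕ) (I J : Finset (ℕ × ℕ)) (B : ℕ × ℕ → ℤ) : ℚ :=
  (Set.ncard {A : ℕ × ℕ → ℤ | IsSignOn (chioExt s t J) A ∧ CondensesTo s t I A B} : ℚ) /
    2 ^ (chioExt s t J).card

/-! For entries `a = A(i,j)`, `e = A(s,t)`, `b = A(i,t)`, `c = A(s,j)` in `{±1}`, the equation
`a e - b c = 2 β` with `β = B(i,j)` says: if `β ≠ 0`, then `b c = -β` and `a = β e`; if `β = 0`,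
then `a = e b c`. So a condensing `A` is an arbitrary sign pattern on `J̆` away from `I` and the
border `{(i,t)} ∪ {(s,j)}`, together with border signs `x` satisfying `x_u x_v = -σ_B(uv)` on every
edge of `X_B`; its entries on `I` are then forced. Such an `x` is a potential of the signing
`-σ_B`. Since `X_B` is bipartite, `-σ_B` is balanced exactly when `σ_B` is, and by Harary's
theorem potentials exist exactly for balanced signings. When they exist they form a single orbit
under multiplication by the `2 ^ β0` sign patterns that are constant on components. Counting gives
`2 ^ (|J̆| - |I| - f0 + β0)` condensing sign patterns. -/

open Finset SimpleGraph

-- At `α = ℕ × ℕ` this is `IsSignOn`; the two are identified by unfolding.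
def IsSignFn {α : Type*} (E : Finset α) (x : α → ℤ) : Prop :=
  (∀ p ∈ E, x p = 1 ∨ x p = -1) ∧ ∀ p ∉ E, x p = 1

namespace IsSignFn

variable {α : Type*} {E F : Finset α} {x y : α → ℤ}

lemma eq_one_or (hx : IsSignFn E x) (p : α) : x p = 1 ∨ x p = -1 := by
  by_cases hp : p ∈ E
  · exact hx.1 p hp
  · exact Or.inl (hx.2 p hp)

lemma mul_self (hx : IsSignFn E x) (p : α) : x p * x p = 1 := by
  rcases hx.eq_one_or p with h | h <;> simp [h]

lemma mul (hx : IsSignFn E x) (hy : IsSignFn E y) : IsSignFn E (x * y) :=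
  ⟨fun p _ => by
    rcases hx.eq_one_or p with h | h <;> rcases hy.eq_one_or p with h' | h' <;> simp [h, h'],
    fun p hp => by simp [hx.2 p hp, hy.2 p hp]⟩

variable [DecidableEq α]

lemma restrict (hx : IsSignFn E x) (F : Finset α) : IsSignFn F (F.piecewise x 1) :=
  ⟨fun p hp => by simpa [hp] using hx.eq_one_or p, fun p hp => by simp [hp]⟩

lemma piecewise (hy : ∀ p ∈ E, y p = 1 ∨ y p = -1) (hx : IsSignFn F x) :
    IsSignFn (E ∪ F) (E.piecewise y x) := by
  refine ⟨fun p hp => ?_, fun p hp => ?_⟩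
  · by_cases hpE : p ∈ E
    · simpa [hpE] using hy p hpE
    · simpa [hpE] using hx.eq_one_or p
  · rw [mem_union, not_or] at hp
    simpa [hp.1] using hx.2 p hp.2

lemma piecewise_restrict (hx : IsSignFn (E ∪ F) x) :
    E.piecewise (E.piecewise x 1) (F.piecewise x 1) = x := by
  ext p
  by_cases hpE : p ∈ E
  · simp [hpE]
  by_cases hpF : p ∈ F
  · simp [hpE, hpF]
  · simp [hpE, hpF, hx.2 p (by simp [hpE, hpF])]

end IsSignFn

section SignFnEquiv

variable {α : Type*} [DecidableEq α] {E F : Finset α} {P : (α → ℤ) → Prop}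

noncomputable def isSignFnUnionEquiv (hEF : Disjoint E F)
    (hP : ∀ x y, Set.EqOn x y E → P x → P y) :
    {x | IsSignFn (E ∪ F) x ∧ P x} ≃ {x | IsSignFn E x ∧ P x} × {x | IsSignFn F x} where
  toFun x := (⟨E.piecewise x 1, x.2.1.restrict E,
      hP _ _ (fun p hp => by simp [mem_coe.1 hp]) x.2.2⟩, ⟨F.piecewise x 1, x.2.1.restrict F⟩)
  invFun y := ⟨E.piecewise y.1 y.2, IsSignFn.piecewise y.1.2.1.1 y.2.2,
    hP _ _ (fun p hp => by simp [mem_coe.1 hp]) y.1.2.2⟩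
  left_inv x := Subtype.ext x.2.1.piecewise_restrict
  right_inv y := by
    ext p
    · by_cases hpE : p ∈ E
      · simp [hpE]
      · simp [hpE, y.1.2.1.2 p hpE]
    · by_cases hpF : p ∈ F
      · simp [hpF, disjoint_right.1 hEF hpF]
      · simp [hpF, y.2.2.2 p hpF]

noncomputable def isSignFnForcedEquiv (hEF : Disjoint E F) (f : (α → ℤ) → α → ℤ)
    (hf : ∀ x y, Set.EqOn x y E → ∀ p ∈ F, f x p = f y p)
    (hf_sign : ∀ x, IsSignFn E x → ∀ p ∈ F, f x p = 1 ∨ f x p = -1)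
    (hP : ∀ x y, Set.EqOn x y E → P x → P y) :
    {x | IsSignFn (E ∪ F) x ∧ P x ∧ ∀ p ∈ F, x p = f x p} ≃ {x | IsSignFn E x ∧ P x} where
  toFun x := ⟨E.piecewise x 1, x.2.1.restrict E,
    hP _ _ (fun p hp => by simp [mem_coe.1 hp]) x.2.2.1⟩
  invFun y :=
    have hEq : Set.EqOn y (F.piecewise (f y) y) E := fun p hp => by
      simp [disjoint_left.1 hEF (mem_coe.1 hp)]
    ⟨F.piecewise (f y) y, by
      rw [union_comm]
      exact IsSignFn.piecewise (hf_sign y y.2.1) y.2.1,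
      hP _ _ hEq y.2.2, fun p hp => by simp [hp, hf _ _ hEq p hp]⟩
  left_inv x := by
    ext p
    show F.piecewise (f (E.piecewise x.1 1)) (E.piecewise x.1 1) p = x.1 p
    by_cases hpF : p ∈ F
    · rw [piecewise_eq_of_mem _ _ _ hpF, x.2.2.2 p hpF]
      exact hf _ _ (fun q hq => by simp [mem_coe.1 hq]) p hpF
    · by_cases hpE : p ∈ E
      · simp [hpF, hpE]
      · simp [hpF, hpE, x.2.1.2 p (by simp [hpE, hpF])]
  right_inv y := by
    ext p
    by_cases hpE : p ∈ E
    · simp [hpE, disjoint_left.1 hEF hpE]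
    · simp [hpE, y.2.1.2 p hpE]

lemma ncard_isSignFn_union_forced (hEF : Disjoint E F) (f : (α → ℤ) → α → ℤ)
    (hf : ∀ x y, Set.EqOn x y E → ∀ p ∈ F, f x p = f y p)
    (hf_sign : ∀ x, IsSignFn E x → ∀ p ∈ F, f x p = 1 ∨ f x p = -1)
    (hP : ∀ x y, Set.EqOn x y E → P x → P y) :
    {x | IsSignFn (E ∪ F) x ∧ P x ∧ ∀ p ∈ F, x p = f x p}.ncard =
      {x | IsSignFn E x ∧ P x}.ncard := by
  rw [← Nat.card_coe_set_eq, Nat.card_congr (isSignFnForcedEquiv hEF f hf hf_sign hP),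
    Nat.card_coe_set_eq]

end SignFnEquiv

section SignFnImage

variable {α β : Type*} [DecidableEq β] {f : α → β} {E : Finset α}

lemma IsSignFn.comp_of_image (hf : ∀ a, ∀ b ∈ E, f a = f b → a = b) {A : β → ℤ}
    (hA : IsSignFn (E.image f) A) : IsSignFn E (A ∘ f) :=
  ⟨fun a ha => hA.1 _ (mem_image_of_mem f ha), fun a ha => hA.2 _ fun hfa => by
    obtain ⟨b, hb, hba⟩ := mem_image.1 hfa
    exact ha (hf a b hb hba.symm ▸ hb)⟩

lemma IsSignFn.exists_image_comp_eq (hf : ∀ a, ∀ b ∈ E, f a = f b → a = b) {x : α → ℤ}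
    (hx : IsSignFn E x) : ∃ A, IsSignFn (E.image f) A ∧ A ∘ f = x := by
  have h_fiber : ∀ a c, f c = f a → x c = x a := by
    intro a c hca
    by_cases ha : a ∈ E
    · rw [hf c a ha hca]
    by_cases hc : c ∈ E
    · exact absurd (hf a c hc hca.symm ▸ hc) ha
    · rw [hx.2 a ha, hx.2 c hc]
  classical
  let A : β → ℤ := fun b => if h : ∃ a, f a = b then x h.choose else 1
  have hAf : A ∘ f = x := funext fun a => by
    simp only [Function.comp_apply, A, dif_pos (⟨a, rfl⟩ : ∃ c, f c = f a)]
    exact h_fiber a _ (Exists.choose_spec (⟨a, rfl⟩ : ∃ c, f c = f a))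
  refine ⟨A, ⟨fun b hb => ?_, fun b hb => ?_⟩, hAf⟩
  · obtain ⟨a, -, rfl⟩ := mem_image.1 hb
    rw [show A (f a) = x a from congr_fun hAf a]
    exact hx.eq_one_or a
  · simp only [A]
    split_ifs with h
    · exact hx.2 _ fun hc => hb (h.choose_spec ▸ mem_image_of_mem f hc)
    · rfl

lemma ncard_isSignFn_image (hf : ∀ a, ∀ b ∈ E, f a = f b → a = b) (P : (α → ℤ) → Prop) :
    {A : β → ℤ | IsSignFn (E.image f) A ∧ P (A ∘ f)}.ncard = {x | IsSignFn E x ∧ P x}.ncard := by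
  have h_inj : Set.InjOn (· ∘ f) {A : β → ℤ | IsSignFn (E.image f) A ∧ P (A ∘ f)} := by
    intro A hA A' hA' hAA'
    ext b
    by_cases hb : b ∈ E.image f
    · obtain ⟨a, -, rfl⟩ := mem_image.1 hb
      exact congr_fun hAA' a
    · rw [hA.1.2 b hb, hA'.1.2 b hb]
  rw [← h_inj.ncard_image]
  congr 1
  ext x
  constructor
  · rintro ⟨A, ⟨hA, hP⟩, rfl⟩
    exact ⟨hA.comp_of_image hf, hP⟩
  · rintro ⟨hx, hP⟩
    obtain ⟨A, hA, rfl⟩ := hx.exists_image_comp_eq hf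
    exact ⟨A, ⟨hA, hP⟩, rfl⟩

end SignFnImage

namespace SimpleGraph

variable {V : Type*} {G : SimpleGraph V}

namespace Walk

variable (σ : Sym2 V → ℤ) {u v w w' : V}

def signProd (p : G.Walk u v) : ℤ := (p.edges.map σ).prod

@[simp] lemma signProd_nil : (nil : G.Walk u u).signProd σ = 1 := rfl

@[simp] lemma signProd_cons (h : G.Adj u v) (p : G.Walk v w) :
    (cons h p).signProd σ = σ s(u, v) * p.signProd σ := by
  simp [signProd]

@[simp] lemma signProd_append (p : G.Walk u v) (q : G.Walk v w) :
    (p.append q).signProd σ = p.signProd σ * q.signProd σ := by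
  simp [signProd]

@[simp] lemma signProd_reverse (p : G.Walk u v) : p.reverse.signProd σ = p.signProd σ := by
  simp [signProd, List.prod_reverse]

@[simp] lemma signProd_copy (p : G.Walk u v) (hu : u = w) (hv : v = w') :
    (p.copy hu hv).signProd σ = p.signProd σ := by
  subst hu hv
  rfl

@[simp] lemma signProd_one (p : G.Walk u v) : p.signProd 1 = 1 := by
  simp [signProd, Pi.one_def]

lemma signProd_neg (p : G.Walk u v) : p.signProd (-σ) = (-1) ^ p.length * p.signProd σ := by
  rw [signProd, signProd, show -σ = Neg.neg ∘ σ from rfl, ← List.map_map, List.prod_map_neg,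
    List.length_map, length_edges]

variable {σ}

lemma signProd_eq_neg_one_pow (hσ : ∀ e ∈ G.edgeSet, σ e = 1 ∨ σ e = -1) (p : G.Walk u v) :
    p.signProd σ = (-1) ^ (p.darts.filter fun d => decide (σ d.edge = -1)).length := by
  induction p with
  | nil => rfl
  | cons h p ih =>
    rcases hσ _ (G.mem_edgeSet.2 h) with h₁ | h₁ <;> simp [h₁, ih, pow_succ]

lemma signProd_eq_one_or (hσ : ∀ e ∈ G.edgeSet, σ e = 1 ∨ σ e = -1) (p : G.Walk u v) :
    p.signProd σ = 1 ∨ p.signProd σ = -1 := by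
  rw [p.signProd_eq_neg_one_pow hσ]
  exact neg_one_pow_eq_or ℤ _

lemma signProd_eq_mul {x : V → ℤ} (hx : ∀ v, x v * x v = 1)
    (hxσ : ∀ a b, G.Adj a b → x a * x b = σ s(a, b)) (p : G.Walk u v) :
    p.signProd σ = x u * x v := by
  induction p with
  | nil => exact (hx _).symm
  | @cons a b c h p ih =>
    rw [signProd_cons, ih, ← hxσ a b h]
    linear_combination x a * x c * hx b

/-- A closed walk that is not a cycle either backtracks along a single edge or contains a shorter
closed subwalk, which can be cut out. -/
lemma signProd_eq_one_of_forall_isCycle (hσ : ∀ e ∈ G.edgeSet, σ e * σ e = 1)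
    (hcyc : ∀ v (c : G.Walk v v), c.IsCycle → c.signProd σ = 1) (p : G.Walk v v) :
    p.signProd σ = 1 := by
  induction hn : p.length using Nat.strong_induction_on generalizing v with
  | _ n ih =>
  cases p with
  | nil => rfl
  | @cons _ c _ h p =>
    by_cases hp : p.IsPath
    · by_cases he : s(v, c) ∈ p.edges
      · have hlen := hp.length_eq_one_of_mem_edges (Sym2.eq_swap ▸ he)
        cases p with
        | nil => exact (h.ne rfl).elim
        | cons h' q =>
          cases q with
          | nil => simpa [Sym2.eq_swap] using hσ _ (G.mem_edgeSet.2 h)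
          | cons => simp at hlen
      · exact hcyc _ _ ((cons_isCycle_iff p h).2 ⟨hp, he⟩)
    · obtain ⟨u, q, ⟨ru, rv, rfl⟩, hq⟩ : ∃ (u : V) (q : G.Walk u u), q.IsSubwalk p ∧ ¬q.Nil := by
        simpa [isPath_iff_isSubwalk_imp_nil] using hp
      have hq : 0 < q.length := by rwa [← not_nil_iff_lt_length]
      have h₁ := ih _ (by simp [← hn]; omega) (cons h (ru.append rv)) rfl
      have h₂ := ih _ (by simp [← hn]; omega) q rfl
      simp only [signProd_cons, signProd_append] at h₁ ⊢
      rw [h₂] at *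
      linear_combination h₁

end Walk

variable {σ : Sym2 V → ℤ}

lemma exists_potential_of_forall_signProd_eq_one (hσ : ∀ e ∈ G.edgeSet, σ e = 1 ∨ σ e = -1)
    (h : ∀ v (p : G.Walk v v), p.signProd σ = 1) :
    ∃ x : V → ℤ, (∀ v, x v = 1 ∨ x v = -1) ∧ ∀ a b, G.Adj a b → x a * x b = σ s(a, b) := by
  have hr : ∀ v, G.Reachable (G.connectedComponentMk v).out v := fun v =>
    ConnectedComponent.exact (G.connectedComponentMk v).out_eq
  refine ⟨fun v => (hr v).some.signProd σ, fun v => (hr v).some.signProd_eq_one_or hσ,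
    fun a b hab => ?_⟩
  have hout : (G.connectedComponentMk a).out = (G.connectedComponentMk b).out := by
    rw [ConnectedComponent.sound hab.reachable]
  have hloop := h _ ((hr a).some.append (.cons hab ((hr b).some.reverse.copy rfl hout.symm)))
  simp only [Walk.signProd_append, Walk.signProd_cons, Walk.signProd_copy,
    Walk.signProd_reverse] at hloop
  have hsq : σ s(a, b) * σ s(a, b) = 1 := by
    rcases hσ _ (G.mem_edgeSet.2 hab) with h₁ | h₁ <;> simp [h₁]
  linear_combination σ s(a, b) * hloop - (hr a).some.signProd σ * (hr b).some.signProd σ * hsq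

def IsSignPotential (G : SimpleGraph V) (σ : Sym2 V → ℤ) (W : Finset V) (x : V → ℤ) : Prop :=
  IsSignFn W x ∧ ∀ a b, G.Adj a b → x a * x b = σ s(a, b)

variable {W : Finset V}

/-- Harary's balance theorem. -/
theorem exists_isSignPotential_iff (hW : ∀ a b, G.Adj a b → a ∈ W)
    (hσ : ∀ e ∈ G.edgeSet, σ e = 1 ∨ σ e = -1) :
    (∃ x, G.IsSignPotential σ W x) ↔ ∀ v (c : G.Walk v v), c.IsCycle → c.signProd σ = 1 := by
  classical
  constructor
  · rintro ⟨x, hx, hxσ⟩ v c -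
    rw [c.signProd_eq_mul hx.mul_self hxσ, hx.mul_self]
  · intro hcyc
    have hsq : ∀ e ∈ G.edgeSet, σ e * σ e = 1 := fun e he => by
      rcases hσ e he with h | h <;> simp [h]
    obtain ⟨x, hx, hxσ⟩ := exists_potential_of_forall_signProd_eq_one hσ
      fun v => Walk.signProd_eq_one_of_forall_isCycle hsq hcyc
    refine ⟨W.piecewise x 1, ⟨fun v hv => by simpa [hv] using hx v, fun v hv => by simp [hv]⟩,
      fun a b hab => ?_⟩
    simp [hW a b hab, hW b a hab.symm, hxσ a b hab]

namespace IsSignPotential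

variable {x₀ x : V → ℤ}

lemma switch (hx₀ : G.IsSignPotential σ W x₀) (hx : G.IsSignPotential σ W x) :
    G.IsSignPotential 1 W (x * x₀) := by
  refine ⟨hx.1.mul hx₀.1, fun a b hab => ?_⟩
  have h₀ := hx₀.2 a b hab
  simp only [Pi.mul_apply, Pi.one_apply]
  linear_combination x₀ a * x₀ b * hx.2 a b hab - x₀ a * x₀ b * h₀ + hx₀.1.mul_self a
    + x₀ a * x₀ a * hx₀.1.mul_self b

lemma unswitch (hx₀ : G.IsSignPotential σ W x₀) (hx : G.IsSignPotential 1 W x) :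
    G.IsSignPotential σ W (x * x₀) := by
  refine ⟨hx.1.mul hx₀.1, fun a b hab => ?_⟩
  have h₁ := hx.2 a b hab
  simp only [Pi.mul_apply, Pi.one_apply] at h₁ ⊢
  linear_combination x₀ a * x₀ b * h₁ + hx₀.2 a b hab

def switchEquiv (hx₀ : G.IsSignPotential σ W x₀) :
    {x | G.IsSignPotential σ W x} ≃ {y | G.IsSignPotential 1 W y} :=
  have hsq : x₀ * x₀ = 1 := funext hx₀.1.mul_self
  (Function.Involutive.toPerm (· * x₀) fun x => by simp [mul_assoc, hsq]).subtypeEquiv fun x =>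
    ⟨hx₀.switch, fun h => by simpa [mul_assoc, hsq] using hx₀.unswitch (x := x * x₀) h⟩

lemma eq_of_walk (hx : G.IsSignPotential 1 W x) {u v : V} (p : G.Walk u v) : x u = x v := by
  have h := p.signProd_eq_mul hx.1.mul_self hx.2
  rw [Walk.signProd_one] at h
  linear_combination -x v * h - x u * hx.1.mul_self v

end IsSignPotential

open Classical in
noncomputable def isSignPotentialOneEquiv (hW : ∀ a b, G.Adj a b → a ∈ W) :
    {y | G.IsSignPotential 1 W y} ≃
      (G.connectedComponentMk '' W → {r : ℤ // r = 1 ∨ r = -1}) where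
  toFun y C := ⟨C.1.lift y fun _ _ p _ => y.2.eq_of_walk p, by
    obtain ⟨v, -, hv⟩ := C.2
    rw [← hv, ConnectedComponent.lift_mk]
    exact y.2.1.eq_one_or v⟩
  invFun g := ⟨fun v => if hv : v ∈ W then g ⟨_, v, hv, rfl⟩ else 1,
    ⟨fun v hv => by simpa [hv] using (g _).2, fun v hv => by simp [hv]⟩,
    fun a b hab => by
      have ha := hW a b hab
      have hb := hW b a hab.symm
      have hab' : (⟨_, a, ha, rfl⟩ : G.connectedComponentMk '' W) = ⟨_, b, hb, rfl⟩ :=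
        Subtype.ext (ConnectedComponent.sound hab.reachable)
      rcases (g ⟨_, b, hb, rfl⟩).2 with h | h <;> simp [ha, hb, hab', h]⟩
  left_inv y := by
    ext v
    by_cases hv : v ∈ W
    · simp [hv]
    · simp [hv, y.2.1.2 v hv]
  right_inv g := by
    ext ⟨_, v, hv, rfl⟩
    simp [mem_coe.1 hv]

theorem ncard_isSignPotential_one (hW : ∀ a b, G.Adj a b → a ∈ W) :
    {y | G.IsSignPotential 1 W y}.ncard = 2 ^ (G.connectedComponentMk '' W).ncard := by
  have : Finite (G.connectedComponentMk '' W) := ((W.finite_toSet).image _).to_subtype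
  rw [← Nat.card_coe_set_eq, Nat.card_congr (isSignPotentialOneEquiv hW), Nat.card_fun,
    Nat.card_coe_set_eq, ← Set.ncard_pair (show (1 : ℤ) ≠ -1 by decide), ← Nat.card_coe_set_eq]
  rfl

theorem ncard_isSignPotential (hW : ∀ a b, G.Adj a b → a ∈ W) {x₀ : V → ℤ}
    (hx₀ : G.IsSignPotential σ W x₀) :
    {x | G.IsSignPotential σ W x}.ncard = 2 ^ (G.connectedComponentMk '' W).ncard := by
  rw [← Nat.card_coe_set_eq, Nat.card_congr hx₀.switchEquiv, Nat.card_coe_set_eq,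
    ncard_isSignPotential_one hW]

end SimpleGraph

section SignFnCount

variable {α : Type*}

lemma ncard_isSignFn (F : Finset α) : {x | IsSignFn F x}.ncard = 2 ^ F.card := by
  have h := ncard_isSignPotential_one (G := ⊥) (W := F) (by simp)
  have h_inj : Function.Injective (⊥ : SimpleGraph α).connectedComponentMk := fun u v huv =>
    reachable_bot.1 (ConnectedComponent.exact huv)
  simpa [IsSignPotential, Set.ncard_image_of_injective _ h_inj] using h

lemma ncard_isSignFn_union [DecidableEq α] {E F : Finset α} {P : (α → ℤ) → Prop}
    (hEF : Disjoint E F) (hP : ∀ x y, Set.EqOn x y E → P x → P y) :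
    {x | IsSignFn (E ∪ F) x ∧ P x}.ncard = {x | IsSignFn E x ∧ P x}.ncard * 2 ^ F.card := by
  rw [← Nat.card_coe_set_eq, Nat.card_congr (isSignFnUnionEquiv hEF hP), Nat.card_prod,
    Nat.card_coe_set_eq, Nat.card_coe_set_eq, ncard_isSignFn]

end SignFnCount

section Chio

variable {s t : ℕ} {I J : Finset (ℕ × ℕ)} {B : ℕ × ℕ → ℤ}

def edgeSign (B : ℕ × ℕ → ℤ) : Sym2 (ℕ ⊕ ℕ) → ℤ :=
  Sym2.lift ⟨eSign B, by rintro (a | a) (b | b) <;> rfl⟩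

def borderPos (s t : ℕ) : ℕ ⊕ ℕ → ℕ × ℕ := Sum.elim (·, t) (s, ·)

def chioForced (s t : ℕ) (B A : ℕ × ℕ → ℤ) (p : ℕ × ℕ) : ℤ :=
  if B p = 0 then A (s, t) * (A (p.1, t) * A (s, p.2)) else B p * A (s, t)

lemma inl_mem_vertSet {p : ℕ × ℕ} (hp : p ∈ I) : Sum.inl p.1 ∈ vertSet I := by
  simpa [vertSet, proj1] using ⟨_, hp⟩

lemma inr_mem_vertSet {p : ℕ × ℕ} (hp : p ∈ I) : Sum.inr p.2 ∈ vertSet I := by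
  simpa [vertSet, proj2] using ⟨_, hp⟩

lemma card_vertSet (I : Finset (ℕ × ℕ)) : (vertSet I).card = fZero I := by
  rw [vertSet, card_union_of_disjoint (by simp [Finset.disjoint_left]),
    card_image_of_injective _ Sum.inl_injective, card_image_of_injective _ Sum.inr_injective, fZero]

lemma sGraph_adj_mem {a b : ℕ ⊕ ℕ} (h : (sGraph I B).Adj a b) : a ∈ vertSet I := by
  rcases h with ⟨p, hp, -, rfl, rfl⟩ | ⟨p, hp, -, rfl, rfl⟩
  exacts [inl_mem_vertSet hp, inr_mem_vertSet hp]

lemma sGraph_closed_walk_even_length {v : ℕ ⊕ ℕ} (c : (sGraph I B).Walk v v) : Even c.length :=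
  (Coloring.mk (fun v => v.isLeft) fun h => by
    rcases h with ⟨p, -, -, rfl, rfl⟩ | ⟨p, -, -, rfl, rfl⟩ <;> simp).even_length_iff_congr c |>.2
    Iff.rfl

lemma edgeSign_eq_one_or (hB : ∀ p ∈ I, B p = -1 ∨ B p = 0 ∨ B p = 1) :
    ∀ e ∈ (sGraph I B).edgeSet, edgeSign B e = 1 ∨ edgeSign B e = -1 := by
  intro e he
  induction e using Sym2.ind with | _ a b => ?_
  rcases he with ⟨p, hp, hB0, rfl, rfl⟩ | ⟨p, hp, hB0, rfl, rfl⟩ <;>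
  · change B p = 1 ∨ B p = -1
    rcases hB p hp with h | h | h <;> simp_all

lemma isBalancedSG_iff (hB : ∀ p ∈ I, B p = -1 ∨ B p = 0 ∨ B p = 1) :
    IsBalancedSG I B ↔
      ∀ v (c : (sGraph I B).Walk v v), c.IsCycle → c.signProd (edgeSign B) = 1 := by
  refine forall₃_congr fun v c _ => ?_
  rw [c.signProd_eq_neg_one_pow (edgeSign_eq_one_or hB), neg_one_pow_eq_one_iff_even (by decide)]
  rfl

theorem isBalancedSG_iff_exists_isSignPotential (hB : ∀ p ∈ I, B p = -1 ∨ B p = 0 ∨ B p = 1) :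
    IsBalancedSG I B ↔ ∃ x, (sGraph I B).IsSignPotential (-edgeSign B) (vertSet I) x := by
  have hσ : ∀ e ∈ (sGraph I B).edgeSet, (-edgeSign B) e = 1 ∨ (-edgeSign B) e = -1 :=
    fun e he => by rcases edgeSign_eq_one_or hB e he with h | h <;> simp [h]
  rw [exists_isSignPotential_iff (fun _ _ => sGraph_adj_mem) hσ, isBalancedSG_iff hB]
  refine forall₃_congr fun v c _ => ?_
  rw [c.signProd_neg, (sGraph_closed_walk_even_length c).neg_one_pow, one_mul]

lemma forall_sGraph_adj_iff (x : ℕ ⊕ ℕ → ℤ) :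
    (∀ a b, (sGraph I B).Adj a b → x a * x b = (-edgeSign B) s(a, b)) ↔
      ∀ p ∈ I, B p ≠ 0 → x (Sum.inl p.1) * x (Sum.inr p.2) = -B p := by
  constructor
  · exact fun h p hp hB0 => h _ _ (Or.inl ⟨p, hp, hB0, rfl, rfl⟩)
  · rintro h a b (⟨p, hp, hB0, rfl, rfl⟩ | ⟨p, hp, hB0, rfl, rfl⟩)
    · exact h p hp hB0
    · rw [mul_comm]
      exact h p hp hB0

lemma chioExt_eq_insert (s t : ℕ) (I : Finset (ℕ × ℕ)) :
    chioExt s t I = insert (s, t) ((vertSet I).image (borderPos s t) ∪ I) := by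
  simp [chioExt, vertSet, proj1, proj2, image_union, image_image, borderPos, Function.comp_def]

lemma chioExt_mono (hIJ : I ⊆ J) : chioExt s t I ⊆ chioExt s t J := by
  unfold chioExt
  gcongr

lemma mem_chioExt {p : ℕ × ℕ} (hp : p ∈ I) :
    (s, t) ∈ chioExt s t I ∧ (p.1, t) ∈ chioExt s t I ∧ (s, p.2) ∈ chioExt s t I ∧
      p ∈ chioExt s t I := by
  rw [chioExt_eq_insert]
  exact ⟨mem_insert_self _ _,
    mem_insert_of_mem (mem_union_left _ (mem_image_of_mem _ (inl_mem_vertSet hp))),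
    mem_insert_of_mem (mem_union_left _ (mem_image_of_mem _ (inr_mem_vertSet hp))),
    mem_insert_of_mem (mem_union_right _ hp)⟩

lemma corner_notMem (hI : ∀ p ∈ I, p.1 ≠ s ∧ p.2 ≠ t) : (s, t) ∉ I :=
  fun h => (hI _ h).1 rfl

lemma borderPos_notMem (hI : ∀ p ∈ I, p.1 ≠ s ∧ p.2 ≠ t) (a : ℕ ⊕ ℕ) : borderPos s t a ∉ I := by
  cases a with
  | inl i => exact fun h => (hI _ h).2 rfl
  | inr j => exact fun h => (hI _ h).1 rfl

lemma borderPos_eq_of_mem_vertSet (hI : ∀ p ∈ I, p.1 ≠ s ∧ p.2 ≠ t) {a b : ℕ ⊕ ℕ}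
    (hb : b ∈ vertSet I) (h : borderPos s t a = borderPos s t b) : a = b := by
  simp only [vertSet, proj1, proj2, mem_union, mem_image] at hb
  rcases hb with ⟨_, ⟨p, hp, rfl⟩, rfl⟩ | ⟨_, ⟨p, hp, rfl⟩, rfl⟩ <;> cases a <;>
    simp only [borderPos, Sum.elim_inl, Sum.elim_inr, Prod.mk.injEq, and_true, true_and] at h <;>
    first | exact absurd h.1.symm (hI p hp).1 | exact absurd h.2.symm (hI p hp).2 | rw [h]

lemma image_borderPos_subset (hI : ∀ p ∈ I, p.1 ≠ s ∧ p.2 ≠ t) (hIJ : I ⊆ J) :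
    (vertSet I).image (borderPos s t) ⊆ chioExt s t J \ I := fun q hq => by
  obtain ⟨a, -, rfl⟩ := mem_image.1 hq
  refine mem_sdiff.2 ⟨chioExt_mono hIJ ?_, borderPos_notMem hI a⟩
  rw [chioExt_eq_insert]
  exact mem_insert_of_mem (mem_union_left _ hq)

lemma card_image_borderPos (hI : ∀ p ∈ I, p.1 ≠ s ∧ p.2 ≠ t) :
    ((vertSet I).image (borderPos s t)).card = fZero I := by
  rw [card_image_of_injOn fun a _ b hb => borderPos_eq_of_mem_vertSet hI hb, card_vertSet]

lemma chioForced_congr {A A' : ℕ × ℕ → ℤ} {p : ℕ × ℕ} (h₀ : A (s, t) = A' (s, t))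
    (h₁ : A (p.1, t) = A' (p.1, t)) (h₂ : A (s, p.2) = A' (s, p.2)) :
    chioForced s t B A p = chioForced s t B A' p := by
  simp only [chioForced, h₀, h₁, h₂]

lemma chioForced_eq_one_or {A : ℕ × ℕ → ℤ} {p : ℕ × ℕ} (hBp : B p = -1 ∨ B p = 0 ∨ B p = 1)
    (h₀ : A (s, t) = 1 ∨ A (s, t) = -1) (h₁ : A (p.1, t) = 1 ∨ A (p.1, t) = -1)
    (h₂ : A (s, p.2) = 1 ∨ A (s, p.2) = -1) :
    chioForced s t B A p = 1 ∨ chioForced s t B A p = -1 := by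
  rw [← Int.isUnit_iff] at h₀ h₁ h₂ ⊢
  unfold chioForced
  split_ifs with h
  · exact h₀.mul (h₁.mul h₂)
  · refine .mul (Int.isUnit_iff.2 ?_) h₀
    rcases hBp with h' | h' | h'
    exacts [Or.inr h', absurd h' h, Or.inl h']

lemma condense_entry_iff {a e b c β : ℤ} (ha : a = 1 ∨ a = -1) (he : e = 1 ∨ e = -1)
    (hb : b = 1 ∨ b = -1) (hc : c = 1 ∨ c = -1) (hβ : β = -1 ∨ β = 0 ∨ β = 1) :
    a * e - b * c = 2 * β ↔ (β ≠ 0 → b * c = -β) ∧ a = if β = 0 then e * (b * c) else β * e := by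
  rcases ha with rfl | rfl <;> rcases he with rfl | rfl <;> rcases hb with rfl | rfl <;>
    rcases hc with rfl | rfl <;> rcases hβ with rfl | rfl | rfl <;> decide

lemma condensesTo_iff (hB : ∀ p ∈ I, B p = -1 ∨ B p = 0 ∨ B p = 1) {A : ℕ × ℕ → ℤ}
    (hA : ∀ q ∈ chioExt s t I, A q = 1 ∨ A q = -1) :
    CondensesTo s t I A B ↔
      (∀ a b, (sGraph I B).Adj a b →
        (A ∘ borderPos s t) a * (A ∘ borderPos s t) b = (-edgeSign B) s(a, b)) ∧
      ∀ p ∈ I, A p = chioForced s t B A p := by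
  have key : ∀ p ∈ I, A p * A (s, t) - A (p.1, t) * A (s, p.2) = 2 * B p ↔
      (B p ≠ 0 → A (p.1, t) * A (s, p.2) = -B p) ∧ A p = chioForced s t B A p := fun p hp =>
    have hm := mem_chioExt (s := s) (t := t) hp
    condense_entry_iff (hA _ hm.2.2.2) (hA _ hm.1) (hA _ hm.2.1) (hA _ hm.2.2.1) (hB p hp)
  rw [forall_sGraph_adj_iff]
  exact ⟨fun h => ⟨fun p hp => ((key p hp).1 (h p hp)).1, fun p hp => ((key p hp).1 (h p hp)).2⟩,
    fun h p hp => (key p hp).2 ⟨h.1 p hp, h.2 p hp⟩⟩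

theorem ncard_condensesTo_mul (hI : ∀ p ∈ I, p.1 ≠ s ∧ p.2 ≠ t) (hIJ : I ⊆ J)
    (hB : ∀ p ∈ I, B p = -1 ∨ B p = 0 ∨ B p = 1) :
    {A | IsSignOn (chioExt s t J) A ∧ CondensesTo s t I A B}.ncard * 2 ^ (I.card + fZero I) =
      {x | (sGraph I B).IsSignPotential (-edgeSign B) (vertSet I) x}.ncard *
        2 ^ (chioExt s t J).card := by
  set K := chioExt s t J
  set D := (vertSet I).image (borderPos s t)
  set P : (ℕ ⊕ ℕ → ℤ) → Prop :=
    fun x => ∀ a b, (sGraph I B).Adj a b → x a * x b = (-edgeSign B) s(a, b)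
  have hK : chioExt s t I ⊆ K := chioExt_mono hIJ
  have hIK : I ⊆ K := fun p hp => hK (mem_chioExt hp).2.2.2
  have hDK : D ⊆ K \ I := image_borderPos_subset hI hIJ
  have hcore : ∀ p ∈ I, (s, t) ∈ K \ I ∧ (p.1, t) ∈ K \ I ∧ (s, p.2) ∈ K \ I := fun p hp =>
    ⟨mem_sdiff.2 ⟨hK (mem_chioExt hp).1, corner_notMem hI⟩,
      hDK (mem_image_of_mem _ (inl_mem_vertSet hp)), hDK (mem_image_of_mem _ (inr_mem_vertSet hp))⟩
  have hP : ∀ A A', Set.EqOn A A' D → P (A ∘ borderPos s t) → P (A' ∘ borderPos s t) := by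
    intro A A' hAA' hA a b hab
    have ha := mem_image_of_mem (borderPos s t) (sGraph_adj_mem hab)
    have hb := mem_image_of_mem (borderPos s t) (sGraph_adj_mem hab.symm)
    simpa only [Function.comp_apply, hAA' ha, hAA' hb] using hA a b hab
  have h_forced : {A | IsSignOn K A ∧ CondensesTo s t I A B} =
      {A | IsSignFn (K \ I ∪ I) A ∧ P (A ∘ borderPos s t) ∧
        ∀ p ∈ I, A p = chioForced s t B A p} := by
    rw [sdiff_union_of_subset hIK]
    exact Set.ext fun A => and_congr_right fun hA =>
      condensesTo_iff hB fun q hq => hA.1 q (hK hq)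
  have hcard : ((K \ I) \ D).card + (I.card + fZero I) = K.card := by
    have h₁ := card_le_card hDK
    have h₂ := card_le_card hIK
    rw [card_sdiff_of_subset hIK, card_image_borderPos hI] at h₁
    rw [card_sdiff_of_subset hDK, card_sdiff_of_subset hIK, card_image_borderPos hI]
    omega
  rw [h_forced, ncard_isSignFn_union_forced disjoint_sdiff_self_left (chioForced s t B)
      (fun A A' h p hp => chioForced_congr (h (hcore p hp).1) (h (hcore p hp).2.1)
        (h (hcore p hp).2.2))
      (fun A hA p hp => chioForced_eq_one_or (hB p hp) (hA.1 _ (hcore p hp).1)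
        (hA.1 _ (hcore p hp).2.1) (hA.1 _ (hcore p hp).2.2))
      fun A A' h => hP A A' (h.mono (coe_subset.2 hDK)),
    ← union_sdiff_of_subset hDK, ncard_isSignFn_union disjoint_sdiff hP,
    ncard_isSignFn_image (fun a b hb => borderPos_eq_of_mem_vertSet hI hb) P, ← hcard,
    pow_add 2 ((K \ I) \ D).card, mul_assoc]
  rfl

theorem pchio_eq_ncard_div (hI : ∀ p ∈ I, p.1 ≠ s ∧ p.2 ≠ t) (hIJ : I ⊆ J)
    (hB : ∀ p ∈ I, B p = -1 ∨ B p = 0 ∨ B p = 1) :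
    Pchio s t I J B = ({x | (sGraph I B).IsSignPotential (-edgeSign B) (vertSet I) x}.ncard : ℚ) /
      2 ^ (I.card + fZero I) := by
  rw [Pchio, div_eq_div_iff (by positivity) (by positivity)]
  exact_mod_cast ncard_condensesTo_mul hI hIJ hB

end Chio

theorem chio_measure_value_general (s t : ℕ)
    (I J : Finset (ℕ × ℕ)) (hIJ : I ⊆ J) (hJ : J ⊆ mgrid s t)
    (B : ℕ × ℕ → ℤ) (hB : ∀ p ∈ I, B p = -1 ∨ B p = 0 ∨ B p = 1) :
    (IsBalancedSG I B →
      Pchio s t I J B = (2 : ℚ) ^ betaZero I B / 2 ^ (I.card + fZero I)) ∧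
    (¬ IsBalancedSG I B → Pchio s t I J B = 0) ∧
    (0 < Pchio s t I J B ↔ IsBalancedSG I B) := by
  have hI : ∀ p ∈ I, p.1 ≠ s ∧ p.2 ≠ t := fun p hp => by
    have := hJ (hIJ hp)
    simp only [mgrid, mem_product, mem_Icc] at this
    omega
  have hbal := isBalancedSG_iff_exists_isSignPotential hB
  have hval : IsBalancedSG I B →
      Pchio s t I J B = (2 : ℚ) ^ betaZero I B / 2 ^ (I.card + fZero I) := fun h => by
    obtain ⟨x₀, hx₀⟩ := hbal.1 h
    rw [pchio_eq_ncard_div hI hIJ hB, ncard_isSignPotential (fun _ _ => sGraph_adj_mem) hx₀]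
    norm_cast
  have hzero : ¬ IsBalancedSG I B → Pchio s t I J B = 0 := fun h => by
    have hempty : {x | (sGraph I B).IsSignPotential (-edgeSign B) (vertSet I) x} = ∅ :=
      Set.eq_empty_of_forall_notMem fun x hx => h (hbal.2 ⟨x, hx⟩)
    rw [pchio_eq_ncard_div hI hIJ hB, hempty, Set.ncard_empty, Nat.cast_zero, zero_div]
  exact ⟨hval, hzero, fun hpos => by_contra fun h => hpos.ne' (hzero h),
    fun h => hval h ▸ by positivity⟩

/-- **Value of the Chio measure on entry-specification events.** If `(X_B, σ_B)` is balanced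
then `P_chio[E_B^J] = (1/2)^{|I| + f0(X_B) − β0(X_B)}` (written `2^{β0} / 2^{|I| + f0}`);
if it is not balanced then `P_chio[E_B^J] = 0`. In particular `P_chio[E_B^J] > 0` iff
`(X_B, σ_B)` is balanced. -/
theorem chio_measure_value (s t : ℕ) (hs : 2 ≤ s) (ht : 2 ≤ t)
    (I J : Finset (ℕ × ℕ)) (hIJ : I ⊆ J) (hJ : J ⊆ mgrid s t)
    (B : ℕ × ℕ → ℤ) (hB : ∀ p ∈ I, B p = -1 ∨ B p = 0 ∨ B p = 1) :
    (IsBalancedSG I B →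
      Pchio s t I J B = (2 : ℚ) ^ betaZero I B / 2 ^ (I.card + fZero I)) ∧
    (¬ IsBalancedSG I B → Pchio s t I J B = 0) ∧
    (0 < Pchio s t I J B ↔ IsBalancedSG I B) :=
  chio_measure_value_general s t I J hIJ hJ B hB
end

section
/- Three-wise independence of Chio condensates (Theorem Ex3): Let n ≥ 2, let I ⊆ {1,…,n−1}² with |I| ≤ 3, and let B : I → {−1,0,+1}. Then |{A : {1,…,n}² → {−1,+1} : A(i,j)·A(n,n) − A(i,n)·A(n,j) = 2·B(i,j) for all (i,j) ∈ I}| = 2^{n² − |I| − |Supp(B)|}; equivalently, P_chio[E_B^{[n−1]²}] = P_lcf[E_B^{[n−1]²}] = (1/2)^{|I| + |Supp(B)|}. -/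
/-- The full grid `{1,…,n} × {1,…,n}` (the domain of the uncondensed sign matrices). -/
def fullGrid (n : ℕ) : Finset (ℕ × ℕ) := Finset.Icc 1 n ×ˢ Finset.Icc 1 n

/-- `P_chio[E_B^{[n−1]²}] = 2^{−n²} · |{A : {1,…,n}² → {±1} : A condenses to B}|`. -/
noncomputable def PchioN (n : ℕ) (I : Finset (ℕ × ℕ)) (B : ℕ × ℕ → ℤ) : ℚ :=
  (Set.ncard {A : ℕ × ℕ → ℤ | IsSignOn (fullGrid n) A ∧ CondensesTo n n I A B} : ℚ) /
    2 ^ (n ^ 2)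

/-- `P_lcf[E_B^{[n−1]²}] = (1/2)^{|I| + |Supp(B)|}` where `Supp(B) = {p ∈ I : B p ≠ 0}`. -/
def PlcfN (I : Finset (ℕ × ℕ)) (B : ℕ × ℕ → ℤ) : ℚ :=
  (1 / 2 : ℚ) ^ (I.card + (I.filter fun p => B p ≠ 0).card)

/-!
Encode a sign matrix by the set `T` of its `-1` entries, so that flipping the signs on a set `R`
is the involution `T ↦ T ∆ R`. An entry `p ∈ I` occurs in no equation but its own, so flipping
it pairs off the matrices; when `B p = 0` exactly one matrix of each pair satisfies the equation
at `p`. When `B p = ±1` that equation also forces `A (p.1, n) * A (n, p.2) = -B p`. If `p` is a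
leaf of the bipartite graph on rows and columns with edge set `Supp B`, flipping the whole row
(or column) of `p` keeps every other equation and toggles this constraint, halving the count
once more. A bipartite graph with at most three edges has no cycle, so the edges of `Supp B`
can be removed leaf by leaf.
-/

open Finset
open scoped symmDiff

section Signs

variable {α : Type*} [DecidableEq α]

def signOf (T : Finset α) (q : α) : ℤ := if q ∈ T then -1 else 1

lemma signOf_eq_one_or_neg_one (T : Finset α) (q : α) : signOf T q = 1 ∨ signOf T q = -1 := by
  unfold signOf; split_ifs <;> simp

lemma signOf_of_notMem {T : Finset α} {q : α} (hq : q ∉ T) : signOf T q = 1 := if_neg hq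

lemma signOf_singleton_of_ne {p q : α} (h : q ≠ p) : signOf {p} q = 1 :=
  signOf_of_notMem (by simpa using h)

lemma signOf_eq_neg_one_iff {T : Finset α} {q : α} : signOf T q = -1 ↔ q ∈ T := by
  unfold signOf; split_ifs with h <;> simp [h]

lemma signOf_ne_zero (T : Finset α) (q : α) : signOf T q ≠ 0 := by
  rcases signOf_eq_one_or_neg_one T q with h | h <;> simp [h]

lemma signOf_symmDiff (T R : Finset α) (q : α) :
    signOf (T ∆ R) q = signOf R q * signOf T q := by
  unfold signOf
  by_cases hT : q ∈ T <;> by_cases hR : q ∈ R <;> simp [mem_symmDiff, hT, hR]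

lemma signOf_injective : Function.Injective (signOf : Finset α → α → ℤ) := fun T T' h => by
  ext q
  rw [← signOf_eq_neg_one_iff, h, signOf_eq_neg_one_iff]

lemma card_filter_mul_two_of_symmDiff {S : Finset (Finset α)} {Q : Finset α → Prop}
    [DecidablePred Q] (R : Finset α) (hS : ∀ T ∈ S, T ∆ R ∈ S)
    (hQ : ∀ T ∈ S, Q (T ∆ R) ↔ ¬Q T) :
    #(S.filter Q) * 2 = #S := by
  have hflip : #(S.filter Q) = #(S.filter fun T => ¬Q T) := by
    refine card_nbij' (· ∆ R) (· ∆ R) (fun T hT => ?_) (fun T hT => ?_)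
      (fun T _ => symmDiff_symmDiff_cancel_right _ _)
      (fun T _ => symmDiff_symmDiff_cancel_right _ _)
    · simp only [mem_coe, mem_filter] at hT ⊢
      exact ⟨hS T hT.1, fun h => (hQ T hT.1).1 h hT.2⟩
    · simp only [mem_coe, mem_filter] at hT ⊢
      exact ⟨hS T hT.1, (hQ T hT.1).2 hT.2⟩
  rw [mul_two]
  nth_rw 2 [hflip]
  exact card_filter_add_card_filter_not Q

end Signs

lemma ncard_isSignOn_and (E : Finset (ℕ × ℕ)) (P : (ℕ × ℕ → ℤ) → Prop)
    [DecidablePred fun T : Finset (ℕ × ℕ) => P (signOf T)] :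
    {A | IsSignOn E A ∧ P A}.ncard = #(E.powerset.filter fun T => P (signOf T)) := by
  have hset : {A | IsSignOn E A ∧ P A} =
      signOf '' ↑(E.powerset.filter fun T => P (signOf T)) := by
    ext A
    simp only [Set.mem_ofPred_eq, Set.mem_image, mem_coe, mem_filter, mem_powerset]
    constructor
    · rintro ⟨⟨hE, hout⟩, hP⟩
      have hA : signOf (E.filter (A · = -1)) = A := by
        funext q
        by_cases hq : q ∈ E
        · rcases hE q hq with h | h <;> simp [signOf, hq, h]
        · simp [signOf, hq, hout q hq]
      exact ⟨_, ⟨filter_subset _ _, by rwa [hA]⟩, hA⟩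
    · rintro ⟨T, ⟨hTE, hP⟩, rfl⟩
      exact ⟨⟨fun q _ => signOf_eq_one_or_neg_one T q,
        fun q hq => signOf_of_notMem fun h => hq (hTE h)⟩, hP⟩
  rw [hset, Set.ncard_image_of_injective _ signOf_injective, Set.ncard_coe_finset]

section SignArithmetic

variable {a e r c b : ℤ}

lemma neg_mul_eq_iff_ne (hr : r = 1 ∨ r = -1) (hc : c = 1 ∨ c = -1) (hb : b = 1 ∨ b = -1) :
    -(r * c) = b ↔ r * c ≠ b := by
  rcases hr with rfl | rfl <;> rcases hc with rfl | rfl <;> rcases hb with rfl | rfl <;> decide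

variable (ha : a = 1 ∨ a = -1) (he : e = 1 ∨ e = -1) (hr : r = 1 ∨ r = -1)
  (hc : c = 1 ∨ c = -1)
include ha he hr hc

lemma eq_zero_or_mul_eq_neg_of_minor_eq (h : a * e - r * c = 2 * b) : b = 0 ∨ r * c = -b := by
  rcases ha with rfl | rfl <;> rcases he with rfl | rfl <;> rcases hr with rfl | rfl <;>
    rcases hc with rfl | rfl <;> omega

lemma neg_minor_eq_iff (h : b = 0 ∨ r * c = -b) :
    -a * e - r * c = 2 * b ↔ ¬a * e - r * c = 2 * b := by
  rcases ha with rfl | rfl <;> rcases he with rfl | rfl <;> rcases hr with rfl | rfl <;>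
    rcases hc with rfl | rfl <;> omega

end SignArithmetic

/-- With `(i, j) ∈ S` read as an edge between row `i` and column `j`, this says that the bipartite
graph is acyclic. -/
def IsBipartiteForest (S : Finset (ℕ × ℕ)) : Prop :=
  ∀ T ⊆ S, T.Nonempty →
    ∃ e ∈ T, (∀ f ∈ T, f.1 = e.1 → f = e) ∨ (∀ f ∈ T, f.2 = e.2 → f = e)

lemma isBipartiteForest_of_card_le_three {S : Finset (ℕ × ℕ)} (hS : #S ≤ 3) :
    IsBipartiteForest S := by
  intro T hTS ⟨e, he⟩
  by_contra! hcyc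
  obtain ⟨⟨f, hf, hfe1, hfe⟩, g, hg, hge2, hge⟩ := hcyc e he
  obtain ⟨-, h, hh, hhf2, hhf⟩ := hcyc f hf
  have hfe2 : f.2 ≠ e.2 := fun h2 => hfe (Prod.ext hfe1 h2)
  have hfour : #({e, f, g, h} : Finset (ℕ × ℕ)) = 4 := by
    have hfg : f ≠ g := fun hfg => hfe (Prod.ext hfe1 (hfg ▸ hge2))
    have hhe : h ≠ e := fun hhe => hfe2 (hhe ▸ hhf2.symm)
    have hhg : h ≠ g := fun hhg => hfe2 (hhf2 ▸ hhg ▸ hge2)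
    rw [card_insert_of_notMem, card_insert_of_notMem, card_pair hhg.symm] <;>
      simp only [mem_insert, mem_singleton, not_or] <;> tauto
  have := card_le_card (show ({e, f, g, h} : Finset (ℕ × ℕ)) ⊆ T by
    simp [insert_subset_iff, he, hf, hg, hh])
  have := card_le_card hTS
  omega

lemma IsBipartiteForest.mono {S S' : Finset (ℕ × ℕ)} (h : IsBipartiteForest S') (hS : S ⊆ S') :
    IsBipartiteForest S :=
  fun T hT => h T (hT.trans hS)

lemma condensesTo_singleton {s t : ℕ} {p : ℕ × ℕ} {A B : ℕ × ℕ → ℤ} :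
    CondensesTo s t {p} A B ↔ A p * A (s, t) - A (p.1, t) * A (s, p.2) = 2 * B p := by
  simp [CondensesTo]

section Condensation

open scoped Classical

variable {s t : ℕ} {G I R : Finset (ℕ × ℕ)} {B : ℕ × ℕ → ℤ} {p : ℕ × ℕ}

noncomputable def condensingSets (s t : ℕ) (G I : Finset (ℕ × ℕ)) (B : ℕ × ℕ → ℤ) :
    Finset (Finset (ℕ × ℕ)) :=
  G.powerset.filter fun T => CondensesTo s t I (signOf T) B

lemma condensingSets_insert :
    condensingSets s t G (insert p I) B =
      (condensingSets s t G I B).filter fun T => CondensesTo s t {p} (signOf T) B := by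
  ext T
  unfold condensingSets
  rw [mem_filter, mem_filter, mem_filter]
  simp only [CondensesTo, forall_mem_insert, mem_singleton, forall_eq]
  tauto

def IsCondensationSymmetry (s t : ℕ) (I : Finset (ℕ × ℕ)) (B : ℕ × ℕ → ℤ)
    (R : Finset (ℕ × ℕ)) : Prop :=
  ∀ q ∈ I, signOf R q * signOf R (s, t) = signOf R (q.1, t) * signOf R (s, q.2) ∧
    (B q ≠ 0 → signOf R (q.1, t) * signOf R (s, q.2) = 1)

lemma IsCondensationSymmetry.condensesTo_iff (hR : IsCondensationSymmetry s t I B R)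
    (T : Finset (ℕ × ℕ)) :
    CondensesTo s t I (signOf (T ∆ R)) B ↔ CondensesTo s t I (signOf T) B := by
  refine forall₂_congr fun q hq => ?_
  obtain ⟨hprod, hsupp⟩ := hR q hq
  set φ := signOf R (q.1, t) * signOf R (s, q.2)
  have hscale : signOf (T ∆ R) q * signOf (T ∆ R) (s, t) -
      signOf (T ∆ R) (q.1, t) * signOf (T ∆ R) (s, q.2) =
      φ * (signOf T q * signOf T (s, t) - signOf T (q.1, t) * signOf T (s, q.2)) := by
    simp only [signOf_symmDiff]
    linear_combination (signOf T q * signOf T (s, t)) * hprod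
  rw [hscale]
  by_cases hBq : B q = 0
  · simp [hBq, φ, signOf_ne_zero]
  · rw [hsupp hBq, one_mul]

lemma IsCondensationSymmetry.symmDiff_mem (hR : IsCondensationSymmetry s t I B R)
    (hRG : R ⊆ G) {T : Finset (ℕ × ℕ)} (hT : T ∈ condensingSets s t G I B) :
    T ∆ R ∈ condensingSets s t G I B := by
  simp only [condensingSets, mem_filter, mem_powerset] at hT ⊢
  exact ⟨symmDiff_subset_union.trans (union_subset hT.1 hRG), (hR.condensesTo_iff T).2 hT.2⟩

lemma isCondensationSymmetry_singleton (hpI : p ∉ I) (hps : p.1 ≠ s) (hpt : p.2 ≠ t) :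
    IsCondensationSymmetry s t I B {p} := by
  intro q hq
  rw [signOf_singleton_of_ne (ne_of_mem_of_not_mem hq hpI),
    signOf_singleton_of_ne (by rintro rfl; exact hps rfl),
    signOf_singleton_of_ne (by rintro rfl; exact hpt rfl),
    signOf_singleton_of_ne (by rintro rfl; exact hps rfl)]
  simp

lemma isCondensationSymmetry_row {i : ℕ} (his : i ≠ s)
    (hIG : ∀ q ∈ I, q ∈ G ∧ (q.1, t) ∈ G) (hleaf : ∀ q ∈ I, B q ≠ 0 → q.1 ≠ i) :
    IsCondensationSymmetry s t I B (G.filter (·.1 = i)) := by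
  intro q hq
  refine ⟨?_, fun hBq => ?_⟩
  · simp [signOf, hIG q hq, his.symm]
  · simp [signOf, hleaf q hq hBq, his.symm]

lemma isCondensationSymmetry_col {j : ℕ} (hjt : j ≠ t)
    (hIG : ∀ q ∈ I, q ∈ G ∧ (s, q.2) ∈ G) (hleaf : ∀ q ∈ I, B q ≠ 0 → q.2 ≠ j) :
    IsCondensationSymmetry s t I B (G.filter (·.2 = j)) := by
  intro q hq
  refine ⟨?_, fun hBq => ?_⟩
  · simp [signOf, hIG q hq, hjt.symm]
  · simp [signOf, hleaf q hq hBq, hjt.symm]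

lemma card_condensingSets_insert_mul_two (hpG : p ∈ G) (hpI : p ∉ I) (hps : p.1 ≠ s)
    (hpt : p.2 ≠ t) :
    #(condensingSets s t G (insert p I) B) * 2 = #((condensingSets s t G I B).filter
      fun T => B p = 0 ∨ signOf T (p.1, t) * signOf T (s, p.2) = -B p) := by
  have hsign : signOf {p} p = -1 := signOf_eq_neg_one_iff.2 (mem_singleton_self p)
  have hrow : signOf {p} (p.1, t) = 1 :=
    signOf_singleton_of_ne fun h => hpt (congrArg Prod.snd h).symm
  have hcol : signOf {p} (s, p.2) = 1 :=
    signOf_singleton_of_ne fun h => hps (congrArg Prod.fst h).symm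
  have hcorner : signOf {p} (s, t) = 1 :=
    signOf_singleton_of_ne fun h => hps (congrArg Prod.fst h).symm
  have hsigns := signOf_eq_one_or_neg_one (α := ℕ × ℕ)
  have hrefilter :
      ((condensingSets s t G I B).filter fun T => CondensesTo s t {p} (signOf T) B) =
      (((condensingSets s t G I B).filter
        fun T => B p = 0 ∨ signOf T (p.1, t) * signOf T (s, p.2) = -B p).filter
          fun T => CondensesTo s t {p} (signOf T) B) := by
    rw [filter_filter]
    refine filter_congr fun T _ => ⟨fun h => ⟨?_, h⟩, And.right⟩
    exact eq_zero_or_mul_eq_neg_of_minor_eq (hsigns _ _) (hsigns _ _) (hsigns _ _) (hsigns _ _)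
      (condensesTo_singleton.1 h)
  rw [condensingSets_insert, hrefilter]
  refine card_filter_mul_two_of_symmDiff {p} (fun T hT => ?_) (fun T hT => ?_)
  · rw [mem_filter] at hT ⊢
    refine ⟨(isCondensationSymmetry_singleton hpI hps hpt).symmDiff_mem
      (singleton_subset_iff.2 hpG) hT.1, ?_⟩
    simpa only [signOf_symmDiff, hrow, hcol, one_mul] using hT.2
  · rw [mem_filter] at hT
    simp only [condensesTo_singleton, signOf_symmDiff, hsign, hrow, hcol, hcorner, one_mul,
      neg_one_mul]
    exact neg_minor_eq_iff (hsigns _ _) (hsigns _ _) (hsigns _ _) (hsigns _ _) hT.2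

lemma card_condensingSets_insert_mul_two_of_eq_zero (hpG : p ∈ G) (hpI : p ∉ I)
    (hps : p.1 ≠ s) (hpt : p.2 ≠ t) (hBp : B p = 0) :
    #(condensingSets s t G (insert p I) B) * 2 = #(condensingSets s t G I B) := by
  rw [card_condensingSets_insert_mul_two hpG hpI hps hpt]
  simp [hBp]

lemma card_condensingSets_insert_mul_four (hpG : p ∈ G) (hpI : p ∉ I) (hps : p.1 ≠ s)
    (hpt : p.2 ≠ t) (hBp : B p = 1 ∨ B p = -1) (hR : IsCondensationSymmetry s t I B R)
    (hRG : R ⊆ G) (hRp : signOf R (p.1, t) * signOf R (s, p.2) = -1) :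
    #(condensingSets s t G (insert p I) B) * 4 = #(condensingSets s t G I B) := by
  have hBp0 : B p ≠ 0 := by rcases hBp with h | h <;> simp [h]
  have hsigns := signOf_eq_one_or_neg_one (α := ℕ × ℕ)
  rw [show (4 : ℕ) = 2 * 2 from rfl, ← mul_assoc,
    card_condensingSets_insert_mul_two hpG hpI hps hpt]
  simp only [hBp0, false_or]
  refine card_filter_mul_two_of_symmDiff R (fun T hT => hR.symmDiff_mem hRG hT) fun T _ => ?_
  have hflip : signOf (T ∆ R) (p.1, t) * signOf (T ∆ R) (s, p.2) =
      -(signOf T (p.1, t) * signOf T (s, p.2)) := by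
    simp only [signOf_symmDiff]
    linear_combination (signOf T (p.1, t) * signOf T (s, p.2)) * hRp
  rw [hflip]
  exact neg_mul_eq_iff_ne (hsigns _ _) (hsigns _ _) (by rcases hBp with h | h <;> simp [h])

lemma card_condensingSets_insert_mul_four_of_leaf (hpI : p ∉ I)
    (hpG : p ∈ G ∧ (p.1, t) ∈ G ∧ (s, p.2) ∈ G) (hps : p.1 ≠ s) (hpt : p.2 ≠ t)
    (hIG : ∀ q ∈ I, q ∈ G ∧ (q.1, t) ∈ G ∧ (s, q.2) ∈ G) (hBp : B p = 1 ∨ B p = -1)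
    (hleaf : (∀ q ∈ I, B q ≠ 0 → q.1 ≠ p.1) ∨ (∀ q ∈ I, B q ≠ 0 → q.2 ≠ p.2)) :
    #(condensingSets s t G (insert p I) B) * 4 = #(condensingSets s t G I B) := by
  obtain ⟨hpG, hptG, hpsG⟩ := hpG
  rcases hleaf with hrow | hcol
  · refine card_condensingSets_insert_mul_four hpG hpI hps hpt hBp
      (isCondensationSymmetry_row hps (fun q hq => ⟨(hIG q hq).1, (hIG q hq).2.1⟩) hrow)
      (filter_subset _ _) ?_
    simp [signOf, hptG, hps.symm]
  · refine card_condensingSets_insert_mul_four hpG hpI hps hpt hBp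
      (isCondensationSymmetry_col hpt (fun q hq => ⟨(hIG q hq).1, (hIG q hq).2.2⟩) hcol)
      (filter_subset _ _) ?_
    simp [signOf, hpsG, hpt.symm]

lemma exists_mem_eq_zero_or_leaf (hforest : IsBipartiteForest (I.filter (B · ≠ 0)))
    (hI : I.Nonempty) :
    ∃ p ∈ I, B p = 0 ∨ (∀ q ∈ I, B q ≠ 0 → q.1 = p.1 → q = p) ∨
      (∀ q ∈ I, B q ≠ 0 → q.2 = p.2 → q = p) := by
  by_cases hsupp : (I.filter (B · ≠ 0)).Nonempty
  · obtain ⟨p, hp, hleaf⟩ := hforest _ Subset.rfl hsupp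
    rw [mem_filter] at hp
    refine ⟨p, hp.1, Or.inr ?_⟩
    simpa only [mem_filter, and_imp] using hleaf
  · obtain ⟨p, hp⟩ := hI
    exact ⟨p, hp, Or.inl (not_not.1 fun h => hsupp ⟨p, mem_filter.2 ⟨hp, h⟩⟩)⟩

theorem card_condensingSets_mul_pow (hIG : ∀ q ∈ I, q ∈ G ∧ (q.1, t) ∈ G ∧ (s, q.2) ∈ G)
    (hIst : ∀ q ∈ I, q.1 ≠ s ∧ q.2 ≠ t) (hB : ∀ q ∈ I, B q = -1 ∨ B q = 0 ∨ B q = 1)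
    (hforest : IsBipartiteForest (I.filter (B · ≠ 0))) :
    #(condensingSets s t G I B) * 2 ^ (#I + #(I.filter (B · ≠ 0))) = 2 ^ #G := by
  induction I using Finset.strongInduction with
  | H I ih =>
  rcases I.eq_empty_or_nonempty with rfl | hne
  · simp [condensingSets, CondensesTo]
  obtain ⟨p, hpI, hp⟩ := exists_mem_eq_zero_or_leaf hforest hne
  obtain ⟨I, hpI', rfl⟩ : ∃ I', p ∉ I' ∧ I = insert p I' :=
    ⟨I.erase p, notMem_erase p I, (insert_erase hpI).symm⟩
  rw [forall_mem_insert] at hIG hIst hB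
  have hIH := ih I (ssubset_insert hpI') hIG.2 hIst.2 hB.2
    (hforest.mono (filter_subset_filter _ (subset_insert p I)))
  rw [card_insert_of_notMem hpI', filter_insert]
  by_cases hBp : B p = 0
  · rw [if_neg (not_not.2 hBp), ← hIH,
      ← card_condensingSets_insert_mul_two_of_eq_zero hIG.1.1 hpI' hIst.1.1 hIst.1.2 hBp]
    ring
  have hBp' : B p = 1 ∨ B p = -1 := by rcases hB.1 with h | h | h <;> simp_all
  have hleaf : (∀ q ∈ I, B q ≠ 0 → q.1 ≠ p.1) ∨ (∀ q ∈ I, B q ≠ 0 → q.2 ≠ p.2) := by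
    refine (hp.resolve_left hBp).imp (fun hrow q hq hBq h => ?_) fun hcol q hq hBq h => ?_
    · exact hpI' (hrow q (mem_insert_of_mem hq) hBq h ▸ hq)
    · exact hpI' (hcol q (mem_insert_of_mem hq) hBq h ▸ hq)
  have hquad := card_condensingSets_insert_mul_four_of_leaf hpI' hIG.1 hIst.1.1 hIst.1.2 hIG.2
    hBp' hleaf
  rw [if_pos hBp, card_insert_of_notMem fun h => hpI' (mem_filter.1 h).1, ← hIH, ← hquad]
  ring

end Condensation

lemma card_fullGrid (n : ℕ) : #(fullGrid n) = n ^ 2 := by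
  simp [fullGrid, sq]

theorem threewise_independence_general (n : ℕ)
    (I : Finset (ℕ × ℕ)) (hI : I ⊆ mgrid n n) (hk : I.card ≤ 3)
    (B : ℕ × ℕ → ℤ) (hB : ∀ p ∈ I, B p = -1 ∨ B p = 0 ∨ B p = 1) :
    Set.ncard {A : ℕ × ℕ → ℤ | IsSignOn (fullGrid n) A ∧ CondensesTo n n I A B} *
        2 ^ (I.card + (I.filter fun p => B p ≠ 0).card) = 2 ^ (n ^ 2) ∧
      PchioN n I B = PlcfN I B := by
  classical
  have hIfull : ∀ q ∈ I, (q ∈ fullGrid n ∧ (q.1, n) ∈ fullGrid n ∧ (n, q.2) ∈ fullGrid n) ∧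
      q.1 ≠ n ∧ q.2 ≠ n := by
    intro q hq
    have := hI hq
    simp only [mgrid, fullGrid, mem_product, mem_Icc] at this ⊢
    omega
  have hcount : Set.ncard {A : ℕ × ℕ → ℤ | IsSignOn (fullGrid n) A ∧ CondensesTo n n I A B} *
      2 ^ (I.card + (I.filter fun p => B p ≠ 0).card) = 2 ^ (n ^ 2) := by
    rw [ncard_isSignOn_and, ← card_fullGrid n]
    exact card_condensingSets_mul_pow (fun q hq => (hIfull q hq).1) (fun q hq => (hIfull q hq).2) hB
      (isBipartiteForest_of_card_le_three ((card_filter_le _ _).trans hk))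
  refine ⟨hcount, ?_⟩
  have hcountℚ := congrArg (Nat.cast : ℕ → ℚ) hcount
  push_cast at hcountℚ
  rw [PchioN, PlcfN, div_eq_iff (by positivity), ← hcountℚ, ← mul_assoc, mul_comm _ (_ ^ _),
    ← mul_assoc, ← mul_pow]
  norm_num

/-- **Three-wise independence of Chio condensates (Theorem Ex3).** For `n ≥ 2`,
`I ⊆ {1,…,n-1}²` with `|I| ≤ 3` and `B : I → {−1,0,+1}`, the number of
`A : {1,…,n}² → {±1}` condensing to `B` equals `2^{n² − |I| − |Supp(B)|}` (stated
multiplied through by `2^{|I| + |Supp(B)|}`); equivalently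
`P_chio[E_B^{[n−1]²}] = P_lcf[E_B^{[n−1]²}] = (1/2)^{|I| + |Supp(B)|}`. -/
theorem threewise_independence (n : ℕ) (hn : 2 ≤ n)
    (I : Finset (ℕ × ℕ)) (hI : I ⊆ mgrid n n) (hk : I.card ≤ 3)
    (B : ℕ × ℕ → ℤ) (hB : ∀ p ∈ I, B p = -1 ∨ B p = 0 ∨ B p = 1) :
    Set.ncard {A : ℕ × ℕ → ℤ | IsSignOn (fullGrid n) A ∧ CondensesTo n n I A B} *
        2 ^ (I.card + (I.filter fun p => B p ≠ 0).card) = 2 ^ (n ^ 2) ∧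
      PchioN n I B = PlcfN I B :=
  threewise_independence_general n I hI hk B hB
end

section
/- Evaluation of the Chio measure on four-entry specifications (recipe H4): Let n ≥ 2, let I ⊆ {1,…,n−1}² with |I| = 4, and let B : I → {−1,0,+1}. If it is not the case that I is a matrix-4-circuit (i.e. I = {i,i'}×{j,j'} for some 1 ≤ i < i' ≤ n−1 and 1 ≤ j < j' ≤ n−1) with all four values of B nonzero, then P_chio[E_B^{[n−1]²}] = P_lcf[E_B^{[n−1]²}] = (1/2)^{|I| + |Supp(B)|}. If I = {i,i'}×{j,j'} and B takes values in {−1,+1}, then: if the product B(i,j)·B(i,j')·B(i',j)·B(i',j') = −1 (equivalently, an odd number of the four values equal +1), then P_chio[E_B^{[n−1]²}] = 0; and if the product equals +1, then P_chio[E_B^{[n−1]²}] = (1/2)^7 = 2 · P_lcf[E_B^{[n−1]²}]. -/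
/-!
All entries being `±1`, the condensation equation `A(i,j)A(n,n) − A(i,n)A(n,j) = 2B(i,j)` holds
iff `A(i,j) = A(n,n)(2B(i,j) + A(i,n)A(n,j))` and, when `B(i,j) ≠ 0`, `A(i,n)A(n,j) = −B(i,j)`.
So the entries on `I` are determined, `A(n,n)` and the entries outside the Chio extension are free,
and it remains to count signs `r` on the rows `p₁(I)` and `c` on the columns `p₂(I)` with
`r_i c_j = −B(i,j)` on `Supp(B)`. If `Supp(B)`, seen as a bipartite graph on rows and columns, is a
forest, peeling leaves shows there are `2^(f₀ − |Supp(B)|)` solutions; four positions form a forest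
unless they are a matrix-4-circuit. On a 4-cycle the system is solvable iff the product of the four
signs is `1`, and then the first three equations form a path, with `2^(4 − 3)` solutions.
-/

open Finset Function

noncomputable def signCount (E : Finset (ℕ × ℕ)) (P : (ℕ × ℕ → ℤ) → Prop) : ℕ :=
  {A | IsSignOn E A ∧ P A}.ncard

section signCount

variable {D E : Finset (ℕ × ℕ)} {P Q : (ℕ × ℕ → ℤ) → Prop}

theorem finite_setOf_isSignOn (E : Finset (ℕ × ℕ)) : {A | IsSignOn E A}.Finite := by
  refine (Set.finite_range fun f : E → ({1, -1} : Finset ℤ) =>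
    fun p => if h : p ∈ E then (f ⟨p, h⟩ : ℤ) else 1).subset fun A hA => ?_
  refine ⟨fun p => ⟨A p, by simpa using hA.1 p p.2⟩, funext fun p => ?_⟩
  by_cases hp : p ∈ E <;> simp [hp, hA.2]

theorem signCount_congr (h : ∀ A, IsSignOn E A → (P A ↔ Q A)) :
    signCount E P = signCount E Q :=
  congrArg Set.ncard <| Set.ext fun A => and_congr_right (h A)

theorem IsSignOn.piecewise {A f : ℕ × ℕ → ℤ} (hA : IsSignOn E A)
    (hf : ∀ p ∈ D, f p = 1 ∨ f p = -1) : IsSignOn (D ∪ E) (D.piecewise f A) := by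
  refine ⟨fun p hp => ?_, fun p hp => ?_⟩
  · by_cases hpD : p ∈ D
    · exact piecewise_eq_of_mem _ _ _ hpD ▸ hf p hpD
    · rw [piecewise_eq_of_notMem _ _ _ hpD]
      exact hA.1 p ((mem_union.1 hp).resolve_left hpD)
  · rw [piecewise_eq_of_notMem _ _ _ fun h => hp (mem_union_left E h)]
    exact hA.2 p fun h => hp (mem_union_right D h)

theorem IsSignOn.piecewise_one {A : ℕ × ℕ → ℤ} (hDE : Disjoint D E) (hA : IsSignOn (D ∪ E) A) :
    IsSignOn E (D.piecewise 1 A) := by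
  refine ⟨fun p hp => ?_, fun p hp => ?_⟩
  · rw [piecewise_eq_of_notMem _ _ _ (disjoint_right.1 hDE hp)]
    exact hA.1 p (mem_union_right D hp)
  · by_cases hpD : p ∈ D
    · exact piecewise_eq_of_mem _ _ _ hpD
    · rw [piecewise_eq_of_notMem _ _ _ hpD]
      exact hA.2 p (by simp [hpD, hp])

/-- The entries on `D` are functions `g p` of the entries on `E`; filling them in is a bijection
from the solutions of `Q` on `E` onto the solutions of `P` on `D ∪ E`. -/
theorem signCount_union_of_determined (hDE : Disjoint D E) {g : ℕ × ℕ → (ℕ × ℕ → ℤ) → ℤ}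
    (hQ : DependsOn Q E) (hg : ∀ p ∈ D, DependsOn (g p) E)
    (hgs : ∀ A, IsSignOn E A → Q A → ∀ p ∈ D, g p A = 1 ∨ g p A = -1)
    (hP : ∀ A, IsSignOn (D ∪ E) A → (P A ↔ Q A ∧ ∀ p ∈ D, A p = g p A)) :
    signCount (D ∪ E) P = signCount E Q := by
  have piecewise_eqOn : ∀ f A : ℕ × ℕ → ℤ, ∀ p ∈ E, D.piecewise f A p = A p :=
    fun f A p hp => piecewise_eq_of_notMem _ _ _ (disjoint_right.1 hDE hp)
  have himage : {A | IsSignOn (D ∪ E) A ∧ P A} =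
      (fun A => D.piecewise (g · A) A) '' {A | IsSignOn E A ∧ Q A} := by
    ext A
    constructor
    · rintro ⟨hA, hPA⟩
      have hQA := (hP A hA).1 hPA
      refine ⟨D.piecewise 1 A, ⟨hA.piecewise_one hDE, hQ (piecewise_eqOn 1 A) ▸ hQA.1⟩,
        funext fun p => ?_⟩
      dsimp only
      by_cases hpD : p ∈ D
      · rw [piecewise_eq_of_mem _ _ _ hpD, hg p hpD (piecewise_eqOn 1 A), hQA.2 p hpD]
      · rw [piecewise_eq_of_notMem _ _ _ hpD, piecewise_eq_of_notMem _ _ _ hpD]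
    · rintro ⟨A, ⟨hA, hQA⟩, rfl⟩
      have hsign := hA.piecewise (hgs A hA hQA)
      refine ⟨hsign, (hP _ hsign).2 ⟨hQ (piecewise_eqOn _ A) ▸ hQA, fun p hp => ?_⟩⟩
      rw [piecewise_eq_of_mem _ _ _ hp, hg p hp (piecewise_eqOn _ A)]
  rw [signCount, signCount, himage]
  refine Set.InjOn.ncard_image fun A hA A' hA' h => funext fun p => ?_
  by_cases hpD : p ∈ D
  · have hpE : p ∉ E := disjoint_left.1 hDE hpD
    rw [hA.1.2 p hpE, hA'.1.2 p hpE]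
  · simpa [piecewise_eq_of_notMem _ _ _ hpD] using congrFun h p

theorem signCount_insert_of_dependsOn {q : ℕ × ℕ} (hq : q ∉ E) (hP : DependsOn P E) :
    signCount (insert q E) P = 2 * signCount E P := by
  have hfix : ∀ v : ℤ, v = 1 ∨ v = -1 →
      signCount (insert q E) (fun A => P A ∧ A q = v) = signCount E P := fun v hv => by
    rw [insert_eq]
    exact signCount_union_of_determined (disjoint_singleton_left.2 hq) hP
      (fun _ _ => (dependsOn_const v).mono (Set.empty_subset _)) (fun _ _ _ _ _ => by simpa)
      (fun A _ => by simp)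
  have hfin : {A | IsSignOn (insert q E) A ∧ P A}.Finite :=
    (finite_setOf_isSignOn _).subset fun _ hA => hA.1
  rw [signCount, ← Set.ncard_inter_add_ncard_sdiff_eq_ncard _ {A | A q = 1} hfin, two_mul]
  nth_rw 1 [← hfix 1 (Or.inl rfl)]
  rw [← hfix (-1) (Or.inr rfl)]
  congr 2
  · ext A; simp [and_assoc]
  · ext A
    simp only [Set.mem_sdiff, Set.mem_ofPred_eq, and_assoc]
    refine and_congr_right fun hA => and_congr_right fun _ => ?_
    rcases hA.1 q (mem_insert_self q E) with h | h <;> simp [h]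

theorem signCount_union_of_dependsOn (hDE : Disjoint D E) (hP : DependsOn P E) :
    signCount (D ∪ E) P = 2 ^ D.card * signCount E P := by
  classical
  induction D using Finset.induction with
  | empty => simp
  | @insert q D hq ih =>
    have hqDE : q ∉ D ∪ E := by
      simp [hq, disjoint_left.1 hDE (mem_insert_self q D)]
    rw [insert_union, signCount_insert_of_dependsOn hqDE (hP.mono (by simp)),
      ih (disjoint_of_subset_left (subset_insert q D) hDE), card_insert_of_notMem hq, pow_succ]
    ring

theorem signCount_true (E : Finset (ℕ × ℕ)) : signCount E (fun _ => True) = 2 ^ E.card := by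
  have hempty : signCount ∅ (fun _ => True) = 1 := by
    rw [signCount, ← Set.ncard_singleton (fun _ : ℕ × ℕ => (1 : ℤ))]
    congr 1
    ext A
    simp [IsSignOn, funext_iff]
  simpa [hempty] using signCount_union_of_dependsOn (P := fun _ => True)
    (disjoint_empty_right E) fun _ _ _ => rfl

theorem signCount_insert_mul_eq {q r : ℕ × ℕ} (hq : q ∉ E) (hr : r ∈ E) (hQ : DependsOn Q E)
    {s : ℤ} (hs : s = 1 ∨ s = -1) :
    signCount (insert q E) (fun A => Q A ∧ A q * A r = s) = signCount E Q := by
  rw [insert_eq]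
  refine signCount_union_of_determined (disjoint_singleton_left.2 hq) hQ
    (fun _ _ _ _ h => congrArg (s * ·) (h r hr)) (fun A hA _ _ _ => ?_) (fun A hA => ?_)
  · rcases hs with rfl | rfl <;> rcases hA.1 r hr with h | h <;> simp [h]
  · have hAq := hA.1 q (by simp)
    have hAr := hA.1 r (by simp [hr])
    simp only [mem_singleton, forall_eq]
    refine and_congr_right fun _ => ?_
    rcases hs with rfl | rfl <;> rcases hAq with h | h <;> rcases hAr with h' | h' <;>
      simp [h, h']

end signCount

def border (n : ℕ) (R C : Finset ℕ) : Finset (ℕ × ℕ) :=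
  R.image (·, n) ∪ C.image (n, ·)

def BorderCond (n : ℕ) (S : Finset (ℕ × ℕ)) (σ A : ℕ × ℕ → ℤ) : Prop :=
  ∀ e ∈ S, A (e.1, n) * A (n, e.2) = σ e

/-- Read each position `(i, j)` as an edge between row `i` and column `j`: `S` is a forest iff
every nonempty subset has an edge at a vertex of degree one. -/
def IsForest (S : Finset (ℕ × ℕ)) : Prop :=
  ∀ T ⊆ S, T.Nonempty →
    ∃ e ∈ T, e.1 ∉ (T.erase e).image Prod.fst ∨ e.2 ∉ (T.erase e).image Prod.snd

section border

variable {n : ℕ} {R C : Finset ℕ} {S : Finset (ℕ × ℕ)} {σ : ℕ × ℕ → ℤ}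

@[simp]
theorem mem_border {p : ℕ × ℕ} :
    p ∈ border n R C ↔ p.1 ∈ R ∧ p.2 = n ∨ p.1 = n ∧ p.2 ∈ C := by
  obtain ⟨a, b⟩ := p
  simp [border, eq_comm, and_comm]

theorem card_border (hR : n ∉ R) : (border n R C).card = R.card + C.card := by
  rw [border, card_union_of_disjoint, card_image_of_injective _ fun _ _ h => congrArg Prod.fst h,
    card_image_of_injective _ fun _ _ h => congrArg Prod.snd h]
  simp only [disjoint_left, mem_image]
  rintro _ ⟨i, hi, rfl⟩ ⟨j, -, h⟩
  obtain ⟨rfl, -⟩ := Prod.mk.inj h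
  exact hR hi

theorem border_eq_insert_left {i : ℕ} (hi : i ∈ R) :
    border n R C = insert (i, n) (border n (R.erase i) C) := by
  ext ⟨a, b⟩
  by_cases ha : a = i <;> simp [ha, hi]

theorem border_eq_insert_right {j : ℕ} (hj : j ∈ C) :
    border n R C = insert (n, j) (border n R (C.erase j)) := by
  ext ⟨a, b⟩
  by_cases hb : b = j <;> simp [hb, hj, or_comm]

theorem dependsOn_borderCond (hS : S ⊆ R ×ˢ C) : DependsOn (BorderCond n S σ) (border n R C) :=
  fun A A' h => propext <| forall₂_congr fun e he => by
    have he' := mem_product.1 (hS he)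
    rw [h (e.1, n) (by simp [he'.1]), h (n, e.2) (by simp [he'.2])]

theorem borderCond_iff_erase {e : ℕ × ℕ} (he : e ∈ S) {A : ℕ × ℕ → ℤ} :
    BorderCond n S σ A ↔ BorderCond n (S.erase e) σ A ∧ A (e.1, n) * A (n, e.2) = σ e := by
  conv_lhs => rw [BorderCond, ← insert_erase he, forall_mem_insert]
  exact and_comm

theorem IsForest.mono {T : Finset (ℕ × ℕ)} (hS : IsForest S) (hT : T ⊆ S) : IsForest T :=
  fun U hU => hS U (hU.trans hT)

theorem two_pow_card_mul_signCount_border_of_isForest (hR : n ∉ R) (hSRC : S ⊆ R ×ˢ C)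
    (hS : IsForest S) (hσ : ∀ e ∈ S, σ e = 1 ∨ σ e = -1) :
    2 ^ S.card * signCount (border n R C) (BorderCond n S σ) = 2 ^ (R.card + C.card) := by
  induction S using Finset.strongInduction generalizing R C with
  | H S ih =>
    rcases S.eq_empty_or_nonempty with rfl | hne
    · rw [signCount_congr (Q := fun _ => True) fun A _ => by simp [BorderCond], signCount_true,
        card_border hR, card_empty, pow_zero, one_mul]
    obtain ⟨e, he, hleaf⟩ := hS S subset_rfl hne
    obtain ⟨heR, heC⟩ := mem_product.1 (hSRC he)
    have hσ' : ∀ f ∈ S.erase e, σ f = 1 ∨ σ f = -1 := fun f hf => hσ f (mem_of_mem_erase hf)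
    have hen : e.1 ≠ n := fun h => hR (h ▸ heR)
    rw [signCount_congr fun A _ => borderCond_iff_erase he, ← card_erase_add_one he, pow_succ]
    rcases hleaf with hrow | hcol
    · have hsub : S.erase e ⊆ R.erase e.1 ×ˢ C := fun f hf => by
        have hf' := mem_product.1 (hSRC (mem_of_mem_erase hf))
        exact mem_product.2 ⟨mem_erase.2 ⟨fun h => hrow (h ▸ mem_image_of_mem _ hf), hf'.1⟩, hf'.2⟩
      rw [border_eq_insert_left heR, signCount_insert_mul_eq (by simp [hen]) (by simp [heC])
        (dependsOn_borderCond hsub) (hσ e he), mul_right_comm,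
        ih _ (erase_ssubset he) (hR ∘ mem_of_mem_erase) hsub (hS.mono (erase_subset e S)) hσ',
        ← pow_succ, ← card_erase_add_one heR]
      ring
    · have hsub : S.erase e ⊆ R ×ˢ C.erase e.2 := fun f hf => by
        have hf' := mem_product.1 (hSRC (mem_of_mem_erase hf))
        exact mem_product.2 ⟨hf'.1, mem_erase.2 ⟨fun h => hcol (h ▸ mem_image_of_mem _ hf), hf'.2⟩⟩
      rw [signCount_congr
        (Q := fun A => BorderCond n (S.erase e) σ A ∧ A (n, e.2) * A (e.1, n) = σ e)
        fun A _ => by rw [mul_comm (A (e.1, n))]]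
      rw [border_eq_insert_right heC, signCount_insert_mul_eq (by simp [hR]) (by simp [heR])
        (dependsOn_borderCond hsub) (hσ e he), mul_right_comm,
        ih _ (erase_ssubset he) hR hsub (hS.mono (erase_subset e S)) hσ',
        ← pow_succ, ← card_erase_add_one heC]
      ring

end border

theorem subset_proj1_product_proj2 (I : Finset (ℕ × ℕ)) : I ⊆ proj1 I ×ˢ proj2 I :=
  fun _ hp => mem_product.2 ⟨mem_image_of_mem _ hp, mem_image_of_mem _ hp⟩

theorem isForest_of_card_le_four {S : Finset (ℕ × ℕ)} (hS : S.card ≤ 4)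
    (hrect : ∀ R C : Finset ℕ, R.card = 2 → C.card = 2 → ¬ R ×ˢ C ⊆ S) : IsForest S := by
  intro T hTS hT
  by_contra! hleaf
  set R := proj1 T
  set C := proj2 T
  -- without a leaf every row and every column of `T` holds at least two of its positions
  have hfiber {β : Type} [DecidableEq β] (f : ℕ × ℕ → β)
      (h : ∀ e ∈ T, f e ∈ (T.erase e).image f) : 2 * (T.image f).card ≤ T.card := by
    refine mul_card_image_le_card T 2 fun b hb => ?_
    obtain ⟨e, he, rfl⟩ := mem_image.1 hb
    obtain ⟨e', he', hfe⟩ := mem_image.1 (h e he)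
    exact one_lt_card.2 ⟨e, by simp [he], e', by simp [mem_of_mem_erase he', hfe],
      (ne_of_mem_erase he').symm⟩
  have hR : 2 * R.card ≤ T.card := hfiber Prod.fst fun e he => (hleaf e he).1
  have hC : 2 * C.card ≤ T.card := hfiber Prod.snd fun e he => (hleaf e he).2
  have hsub : T ⊆ R ×ˢ C := subset_proj1_product_proj2 T
  have hRC : T.card ≤ R.card * C.card := card_product R C ▸ card_le_card hsub
  have hR0 : 0 < R.card := card_pos.2 (hT.image _)
  have hT4 : T.card ≤ 4 := (card_le_card hTS).trans hS
  have hR2 : R.card = 2 := by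
    have : R.card ≤ 2 := by omega
    have : C.card ≤ 2 := by omega
    interval_cases R.card <;> interval_cases C.card <;> omega
  have hC2 : C.card = 2 := by
    have : C.card ≤ 2 := by omega
    interval_cases C.card <;> omega
  refine hrect R C hR2 hC2 (subset_trans (eq_of_subset_of_card_le hsub ?_).symm.subset hTS)
  rw [card_product, hR2, hC2]
  omega

theorem borderCond_rectangle_iff {n i i' j j' : ℕ} {σ A : ℕ × ℕ → ℤ}
    (hi : A (i, n) = 1 ∨ A (i, n) = -1) (hi' : A (i', n) = 1 ∨ A (i', n) = -1)
    (hj : A (n, j) = 1 ∨ A (n, j) = -1) (hj' : A (n, j') = 1 ∨ A (n, j') = -1)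
    (hσ : σ (i', j') = 1 ∨ σ (i', j') = -1) :
    BorderCond n {(i, j), (i, j'), (i', j), (i', j')} σ A ↔
      BorderCond n {(i, j), (i, j'), (i', j)} σ A ∧
        σ (i, j) * σ (i, j') * σ (i', j) * σ (i', j') = 1 := by
  simp only [BorderCond, forall_mem_insert, mem_singleton, forall_eq]
  constructor
  · rintro ⟨h₁, h₂, h₃, h₄⟩
    refine ⟨⟨h₁, h₂, h₃⟩, ?_⟩
    rw [← h₁, ← h₂, ← h₃, ← h₄]
    rcases hi with a | a <;> rcases hi' with a' | a' <;> rcases hj with b | b <;>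
      rcases hj' with b' | b' <;> simp [a, a', b, b']
  · rintro ⟨⟨h₁, h₂, h₃⟩, h⟩
    refine ⟨h₁, h₂, h₃, ?_⟩
    rw [← h₁, ← h₂, ← h₃] at h
    rcases hi with a | a <;> rcases hi' with a' | a' <;> rcases hj with b | b <;>
      rcases hj' with b' | b' <;> rcases hσ with s | s <;> simp [a, a', b, b', s] at h ⊢

theorem signCount_border_rectangle {n i i' j j' : ℕ} (hi : i ≠ i') (hj : j ≠ j')
    (hn : n ∉ ({i, i'} : Finset ℕ)) {σ : ℕ × ℕ → ℤ}
    (hσ : ∀ e ∈ ({(i, j), (i, j'), (i', j), (i', j')} : Finset (ℕ × ℕ)), σ e = 1 ∨ σ e = -1) :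
    signCount (border n {i, i'} {j, j'}) (BorderCond n {(i, j), (i, j'), (i', j), (i', j')} σ) =
      if σ (i, j) * σ (i, j') * σ (i', j) * σ (i', j') = 1 then 2 else 0 := by
  rw [signCount_congr fun A hA => borderCond_rectangle_iff (hA.1 _ (by simp)) (hA.1 _ (by simp))
    (hA.1 _ (by simp)) (hA.1 _ (by simp)) (hσ _ (by simp))]
  split_ifs with hprod
  · have hpath : IsForest {(i, j), (i, j'), (i', j)} := by
      refine isForest_of_card_le_four (card_le_three.trans (by norm_num)) fun R C hR hC h => ?_
      have := card_le_card h
      rw [card_product, hR, hC] at this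
      exact absurd (this.trans card_le_three) (by norm_num)
    have h := two_pow_card_mul_signCount_border_of_isForest (C := {j, j'}) hn
      (by simp [subset_iff]) hpath fun e he => hσ e (by simp at he ⊢; tauto)
    rw [card_insert_of_notMem (by simp [hi, hj]), card_pair (by simp [hi]), card_pair hi,
      card_pair hj] at h
    simp only [hprod, and_true]
    change signCount _ (BorderCond n _ σ) = 2
    norm_num at h
    omega
  · simp [signCount, hprod]

theorem exists_lt_of_card_eq_two {R : Finset ℕ} (h : R.card = 2) :
    ∃ i i', i < i' ∧ R = {i, i'} := by
  obtain ⟨a, b, hab, rfl⟩ := card_eq_two.1 h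
  rcases hab.lt_or_gt with hab | hab
  · exact ⟨a, b, hab, rfl⟩
  · exact ⟨b, a, hab, pair_comm a b⟩

theorem pair_product_pair (i i' j j' : ℕ) :
    ({i, i'} ×ˢ {j, j'} : Finset (ℕ × ℕ)) = {(i, j), (i, j'), (i', j), (i', j')} := by
  ext ⟨a, b⟩
  simp only [mem_product, mem_insert, mem_singleton, Prod.mk.injEq]
  tauto

theorem neg_eq_one_or_neg_one {β : ℤ} (hβ : β = -1 ∨ β = 0 ∨ β = 1) (h : β ≠ 0) :
    -β = 1 ∨ -β = -1 := by
  omega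

theorem mul_sub_mul_eq_two_mul_iff {x d b c β : ℤ} (hx : x = 1 ∨ x = -1) (hd : d = 1 ∨ d = -1)
    (hb : b = 1 ∨ b = -1) (hc : c = 1 ∨ c = -1) (hβ : β = -1 ∨ β = 0 ∨ β = 1) :
    x * d - b * c = 2 * β ↔ (β ≠ 0 → b * c = -β) ∧ x = d * (2 * β + b * c) := by
  rcases hx with rfl | rfl <;> rcases hd with rfl | rfl <;> rcases hb with rfl | rfl <;>
    rcases hc with rfl | rfl <;> rcases hβ with rfl | rfl | rfl <;> decide

theorem mul_two_mul_add_mul_eq_one_or {d b c β : ℤ} (hd : d = 1 ∨ d = -1) (hb : b = 1 ∨ b = -1)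
    (hc : c = 1 ∨ c = -1) (hβ : β = -1 ∨ β = 0 ∨ β = 1) (h : β ≠ 0 → b * c = -β) :
    d * (2 * β + b * c) = 1 ∨ d * (2 * β + b * c) = -1 := by
  rcases hd with rfl | rfl <;> rcases hb with rfl | rfl <;> rcases hc with rfl | rfl <;>
    rcases hβ with rfl | rfl | rfl <;> simp_all

theorem chioExt_eq_union (n : ℕ) (I : Finset (ℕ × ℕ)) :
    chioExt n n I = I ∪ insert (n, n) (border n (proj1 I) (proj2 I)) := by
  ext p
  simp only [chioExt, border, proj1, proj2, mem_insert, mem_union]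
  tauto

theorem mk_mem_border_proj {n : ℕ} {I : Finset (ℕ × ℕ)} {p : ℕ × ℕ} (hp : p ∈ I) :
    (p.1, n) ∈ border n (proj1 I) (proj2 I) ∧ (n, p.2) ∈ border n (proj1 I) (proj2 I) :=
  ⟨mem_border.2 (.inl ⟨show p.1 ∈ proj1 I from mem_image_of_mem _ hp, rfl⟩),
    mem_border.2 (.inr ⟨rfl, show p.2 ∈ proj2 I from mem_image_of_mem _ hp⟩)⟩

theorem dependsOn_condensesTo (n : ℕ) (I : Finset (ℕ × ℕ)) (B : ℕ × ℕ → ℤ) :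
    DependsOn (CondensesTo n n I · B) (chioExt n n I) := fun A A' h =>
  propext <| forall₂_congr fun p hp => by
    have hK : ∀ q ∈ insert (n, n) (border n (proj1 I) (proj2 I)), A q = A' q :=
      fun q hq => h q (chioExt_eq_union n I ▸ mem_union_right _ hq)
    rw [h p (chioExt_eq_union n I ▸ mem_union_left _ hp), hK _ (mem_insert_self _ _),
      hK _ (mem_insert_of_mem (mk_mem_border_proj hp).1),
      hK _ (mem_insert_of_mem (mk_mem_border_proj hp).2)]

section mgrid

variable {n : ℕ} {I : Finset (ℕ × ℕ)} {B : ℕ × ℕ → ℤ}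

theorem bounds_of_mem_of_subset_mgrid (hI : I ⊆ mgrid n n) {p : ℕ × ℕ} (hp : p ∈ I) :
    1 ≤ p.1 ∧ p.1 < n ∧ 1 ≤ p.2 ∧ p.2 < n := by
  have := mem_product.1 (hI hp)
  simp only [mem_Icc] at this
  omega

theorem bounds_of_mem_border_of_subset_mgrid (hI : I ⊆ mgrid n n) {p : ℕ × ℕ}
    (hp : p ∈ border n (proj1 I) (proj2 I)) :
    1 ≤ p.1 ∧ p.1 ≤ n ∧ 1 ≤ p.2 ∧ p.2 ≤ n ∧ (p.2 = n ∧ p.1 < n ∨ p.1 = n ∧ p.2 < n) := by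
  simp only [mem_border, proj1, proj2, mem_image] at hp
  rcases hp with ⟨⟨q, hq, hq₁⟩, h⟩ | ⟨h, ⟨q, hq, hq₂⟩⟩ <;>
    · have := bounds_of_mem_of_subset_mgrid hI hq
      omega

theorem notMem_proj1_of_subset_mgrid (hI : I ⊆ mgrid n n) : n ∉ proj1 I := by
  simp only [proj1, mem_image, not_exists, not_and]
  exact fun p hp => (bounds_of_mem_of_subset_mgrid hI hp).2.1.ne

theorem mk_self_notMem_border_of_subset_mgrid (hI : I ⊆ mgrid n n) :
    (n, n) ∉ border n (proj1 I) (proj2 I) := fun h => by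
  have := bounds_of_mem_border_of_subset_mgrid hI h
  omega

theorem disjoint_insert_border_of_subset_mgrid (hI : I ⊆ mgrid n n) :
    Disjoint I (insert (n, n) (border n (proj1 I) (proj2 I))) := by
  refine disjoint_left.2 fun p hp hpK => ?_
  have := bounds_of_mem_of_subset_mgrid hI hp
  rcases mem_insert.1 hpK with rfl | hpK
  · omega
  · have := bounds_of_mem_border_of_subset_mgrid hI hpK
    omega

theorem chioExt_subset_fullGrid (hn : 1 ≤ n) (hI : I ⊆ mgrid n n) :
    chioExt n n I ⊆ fullGrid n := by
  intro p hp
  simp only [fullGrid, mem_product, mem_Icc]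
  rw [chioExt_eq_union] at hp
  rcases mem_union.1 hp with hp | hp
  · have := bounds_of_mem_of_subset_mgrid hI hp
    omega
  rcases mem_insert.1 hp with rfl | hp
  · omega
  · have := bounds_of_mem_border_of_subset_mgrid hI hp
    omega

theorem card_chioExt (hI : I ⊆ mgrid n n) :
    (chioExt n n I).card = I.card + ((proj1 I).card + (proj2 I).card + 1) := by
  rw [chioExt_eq_union, card_union_of_disjoint (disjoint_insert_border_of_subset_mgrid hI),
    card_insert_of_notMem (mk_self_notMem_border_of_subset_mgrid hI),
    card_border (notMem_proj1_of_subset_mgrid hI)]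

theorem signCount_condensesTo (hI : I ⊆ mgrid n n)
    (hB : ∀ p ∈ I, B p = -1 ∨ B p = 0 ∨ B p = 1) :
    signCount (chioExt n n I) (CondensesTo n n I · B) =
      signCount (insert (n, n) (border n (proj1 I) (proj2 I)))
        (BorderCond n (I.filter fun p => B p ≠ 0) (-B)) := by
  have hK {p} (hp : p ∈ I) := mk_mem_border_proj (n := n) hp
  have hsupp := (filter_subset (fun p => B p ≠ 0) I).trans (subset_proj1_product_proj2 I)
  rw [chioExt_eq_union]
  refine signCount_union_of_determined (disjoint_insert_border_of_subset_mgrid hI)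
    (g := fun p A => A (n, n) * (2 * B p + A (p.1, n) * A (n, p.2)))
    ((dependsOn_borderCond hsupp).mono (coe_subset.2 (subset_insert _ _)))
    (fun p hp A A' h => ?_) (fun A hA hQA p hp => ?_) (fun A hA => ?_)
  · dsimp only
    rw [h (n, n) (mem_insert_self _ _), h (p.1, n) (mem_insert_of_mem (hK hp).1),
      h (n, p.2) (mem_insert_of_mem (hK hp).2)]
  · exact mul_two_mul_add_mul_eq_one_or (hA.1 _ (mem_insert_self _ _))
      (hA.1 _ (mem_insert_of_mem (hK hp).1)) (hA.1 _ (mem_insert_of_mem (hK hp).2))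
      (hB p hp) fun hBp => hQA p (mem_filter.2 ⟨hp, hBp⟩)
  · have hsign : ∀ q ∈ insert (n, n) (border n (proj1 I) (proj2 I)), A q = 1 ∨ A q = -1 :=
      fun q hq => hA.1 q (mem_union_right _ hq)
    rw [CondensesTo, forall₂_congr fun p hp => mul_sub_mul_eq_two_mul_iff
      (hA.1 p (mem_union_left _ hp)) (hsign _ (mem_insert_self _ _))
      (hsign _ (mem_insert_of_mem (hK hp).1)) (hsign _ (mem_insert_of_mem (hK hp).2))
      (hB p hp), forall₂_and]
    simp [BorderCond, mem_filter, and_imp]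

theorem pchioN_mul_two_pow (hn : 1 ≤ n) (hI : I ⊆ mgrid n n)
    (hB : ∀ p ∈ I, B p = -1 ∨ B p = 0 ∨ B p = 1) :
    PchioN n I B * 2 ^ ((proj1 I).card + (proj2 I).card + I.card) =
      signCount (border n (proj1 I) (proj2 I)) (BorderCond n (I.filter fun p => B p ≠ 0) (-B)) := by
  have hsub := chioExt_subset_fullGrid hn hI
  have hcount : {A | IsSignOn (fullGrid n) A ∧ CondensesTo n n I A B}.ncard =
      2 ^ (n ^ 2 - (chioExt n n I).card) *
        (2 * signCount (border n (proj1 I) (proj2 I))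
          (BorderCond n (I.filter fun p => B p ≠ 0) (-B))) := by
    change signCount _ _ = _
    rw [← sdiff_union_of_subset hsub,
      signCount_union_of_dependsOn sdiff_disjoint (dependsOn_condensesTo n I B),
      card_sdiff_of_subset hsub, signCount_condensesTo hI hB,
      signCount_insert_of_dependsOn (mk_self_notMem_border_of_subset_mgrid hI)
        (dependsOn_borderCond ((filter_subset _ I).trans (subset_proj1_product_proj2 I)))]
    simp [fullGrid, sq]
  obtain ⟨m, hm⟩ : ∃ m, n ^ 2 = m + (chioExt n n I).card := ⟨_, (Nat.sub_add_cancel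
    (by simpa [fullGrid, sq] using card_le_card hsub)).symm⟩
  rw [PchioN, hcount, hm, Nat.add_sub_cancel, card_chioExt hI]
  push_cast
  field_simp
  ring


theorem pchioN_eq_plcfN_of_isForest (hn : 1 ≤ n) (hI : I ⊆ mgrid n n)
    (hB : ∀ p ∈ I, B p = -1 ∨ B p = 0 ∨ B p = 1) (hS : IsForest (I.filter fun p => B p ≠ 0)) :
    PchioN n I B = PlcfN I B := by
  have hcount := two_pow_card_mul_signCount_border_of_isForest (σ := -B)
    (notMem_proj1_of_subset_mgrid hI)
    ((filter_subset _ _).trans (subset_proj1_product_proj2 I)) hS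
    fun p hp => neg_eq_one_or_neg_one (hB p (mem_filter.1 hp).1) (mem_filter.1 hp).2
  rw [← Nat.cast_inj (R := ℚ), Nat.cast_mul, Nat.cast_pow, ← pchioN_mul_two_pow hn hI hB]
    at hcount
  push_cast at hcount
  rw [PlcfN, div_pow, one_pow, eq_div_iff (by positivity)]
  refine mul_left_cancel₀ (pow_ne_zero ((proj1 I).card + (proj2 I).card) two_ne_zero) ?_
  linear_combination hcount

theorem pchioN_circuit_mul_two_pow {i i' j j' : ℕ} (hi : i ≠ i') (hj : j ≠ j') (hn : 1 ≤ n)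
    (hI : {(i, j), (i, j'), (i', j), (i', j')} ⊆ mgrid n n)
    (hB : ∀ p ∈ ({(i, j), (i, j'), (i', j), (i', j')} : Finset _), B p = -1 ∨ B p = 0 ∨ B p = 1)
    (hB₀ : ∀ p ∈ ({(i, j), (i, j'), (i', j), (i', j')} : Finset _), B p ≠ 0) :
    PchioN n {(i, j), (i, j'), (i', j), (i', j')} B * 2 ^ 8 =
      if B (i, j) * B (i, j') * B (i', j) * B (i', j') = 1 then 2 else 0 := by
  have hS := filter_true_of_mem hB₀
  have hp1 : proj1 {(i, j), (i, j'), (i', j), (i', j')} = {i, i'} := by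
    rw [proj1, ← pair_product_pair, product_image_fst (by simp)]
  have hp2 : proj2 {(i, j), (i, j'), (i', j), (i', j')} = {j, j'} := by
    rw [proj2, ← pair_product_pair, product_image_snd (by simp)]
  have hprod : (-B) (i, j) * (-B) (i, j') * (-B) (i', j) * (-B) (i', j') =
      B (i, j) * B (i, j') * B (i', j) * B (i', j') := by
    simp only [Pi.neg_apply]
    ring
  have hcard : ({(i, j), (i, j'), (i', j), (i', j')} : Finset (ℕ × ℕ)).card = 4 := by
    rw [← pair_product_pair, card_product, card_pair hi, card_pair hj]
  have h := pchioN_mul_two_pow hn hI hB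
  rw [hS, hp1, hp2, card_pair hi, card_pair hj, hcard,
    signCount_border_rectangle (σ := -B) hi hj (hp1 ▸ notMem_proj1_of_subset_mgrid hI)
    fun p hp => neg_eq_one_or_neg_one (hB p hp) (hB₀ p hp), hprod] at h
  rw [h]
  split_ifs <;> norm_num

end mgrid

theorem isForest_filter_of_not_circuit {I : Finset (ℕ × ℕ)} (hk : I.card ≤ 4) {B : ℕ × ℕ → ℤ}
    (hcirc : ¬ ∃ i i' j j' : ℕ, i < i' ∧ j < j' ∧
      I = {(i, j), (i, j'), (i', j), (i', j')} ∧ ∀ p ∈ I, B p ≠ 0) :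
    IsForest (I.filter fun p => B p ≠ 0) := by
  refine isForest_of_card_le_four ((card_filter_le _ _).trans hk) fun R C hR hC hRC => hcirc ?_
  have hRCI : R ×ˢ C = I := eq_of_subset_of_card_le (hRC.trans (filter_subset _ _))
    (by rw [card_product, hR, hC]; exact hk)
  obtain ⟨i, i', hi, rfl⟩ := exists_lt_of_card_eq_two hR
  obtain ⟨j, j', hj, rfl⟩ := exists_lt_of_card_eq_two hC
  exact ⟨i, i', j, j', hi, hj, hRCI.symm.trans (pair_product_pair ..),
    fun p hp => (mem_filter.1 (hRC (hRCI ▸ hp))).2⟩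

/-- **Evaluation of the Chio measure on four-entry specifications (recipe H4).**
Let `n ≥ 2`, `I ⊆ {1,…,n-1}²` with `|I| = 4`, and `B : I → {−1,0,+1}`. If `I` is not a
matrix-4-circuit `{i,i'}×{j,j'}` with all four `B`-values nonzero, then
`P_chio[E_B] = P_lcf[E_B] = (1/2)^{|I|+|Supp(B)|}`. If `I = {i,i'}×{j,j'}` and `B` is
nonzero on `I`, then: if `B(i,j)·B(i,j')·B(i',j)·B(i',j') = −1` then `P_chio[E_B] = 0`,
and if the product is `+1` then `P_chio[E_B] = (1/2)⁷ = 2·P_lcf[E_B]`. -/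
theorem chio_measure_four_entries (n : ℕ) (hn : 2 ≤ n)
    (I : Finset (ℕ × ℕ)) (hI : I ⊆ mgrid n n) (hk : I.card = 4)
    (B : ℕ × ℕ → ℤ) (hB : ∀ p ∈ I, B p = -1 ∨ B p = 0 ∨ B p = 1) :
    ((¬ ∃ i i' j j' : ℕ, i < i' ∧ j < j' ∧
        I = {(i, j), (i, j'), (i', j), (i', j')} ∧ ∀ p ∈ I, B p ≠ 0) →
      PchioN n I B = PlcfN I B) ∧
    (∀ i i' j j' : ℕ, i < i' → j < j' →
      I = {(i, j), (i, j'), (i', j), (i', j')} → (∀ p ∈ I, B p ≠ 0) →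
      (B (i, j) * B (i, j') * B (i', j) * B (i', j') = -1 → PchioN n I B = 0) ∧
      (B (i, j) * B (i, j') * B (i', j) * B (i', j') = 1 →
        PchioN n I B = (1 / 2 : ℚ) ^ 7 ∧ PchioN n I B = 2 * PlcfN I B)) := by
  refine ⟨fun hcirc => pchioN_eq_plcfN_of_isForest (by omega) hI hB
    (isForest_filter_of_not_circuit hk.le hcirc), fun i i' j j' hi hj hIeq hB₀ => ?_⟩
  subst hIeq
  have h := pchioN_circuit_mul_two_pow hi.ne hj.ne (by omega) hI hB hB₀
  refine ⟨fun hprod => by simpa [hprod] using h, fun hprod => ?_⟩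
  have hP : PchioN n {(i, j), (i, j'), (i', j), (i', j')} B = (1 / 2 : ℚ) ^ 7 := by
    rw [if_pos hprod] at h
    linarith
  rw [PlcfN, filter_true_of_mem hB₀, hk, hP]
  norm_num
end
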